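/- arXiv:1710.09451 — 8 statements merged into one kernel-verified Lean document; each statement's English description precedes it below -/
import Mathlib

section
/- Almost surely, the number of samples M in [0,1] satisfies M > n(1 − ρ)/λ − 1. Consequently, if n(1 − ρ) > λ, then almost surely 1/M < λ/(n(1 − ρ) − λ) and hence E[1/M] ≤ λ/(n(1 − ρ) − λ). -/
/-!
The increments satisfy `X₁ = Y₁ ≤ λ/n` and `X_{i+1} = ρ X_i + Y_{i+1}`, so every intersample
distance is at most the fixed point `C = (λ/n)/(1 - ρ)` of `x ↦ ρ x + λ/n`. Hence
`1 < S_{M+1} ≤ (M + 1) C`, i.e. `M > 1/C - 1 = n(1 - ρ)/λ - 1`. When `n(1 - ρ) > λ` this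
lower bound is positive, which bounds `1/M` pointwise and therefore in expectation.
-/

open MeasureTheory ProbabilityTheory Real

theorem le_div_one_sub_of_eq_mul_add {x y : ℕ → ℝ} {ρ b : ℝ} (hρ0 : 0 ≤ ρ) (hρ1 : ρ < 1)
    (hb : 0 ≤ b) (hx1 : x 1 ≤ b) (hy : ∀ i, y i ≤ b)
    (hrec : ∀ i, 2 ≤ i → x i = ρ * x (i - 1) + y i) :
    ∀ i, 1 ≤ i → x i ≤ b / (1 - ρ) := by
  have hρ' : 0 < 1 - ρ := sub_pos.2 hρ1
  have hfix : ρ * (b / (1 - ρ)) + b = b / (1 - ρ) := by field_simp; ring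
  intro i hi
  induction i, hi using Nat.le_induction with
  | base => exact hx1.trans (le_div_self hb hρ' (by linarith))
  | succ i hi ih =>
    rw [hrec (i + 1) (by omega), Nat.add_sub_cancel, ← hfix]
    gcongr
    exact hy _

theorem one_lt_succ_mul_of_one_lt_sum_Icc {x : ℕ → ℝ} {C : ℝ} {m : ℕ}
    (hx : ∀ i, 1 ≤ i → x i ≤ C) (hsum : 1 < ∑ i ∈ Finset.Icc 1 (m + 1), x i) :
    1 < (m + 1 : ℝ) * C := by
  have hle : ∑ i ∈ Finset.Icc 1 (m + 1), x i ≤ (m + 1 : ℝ) * C := by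
    simpa using Finset.sum_le_card_nsmul (Finset.Icc 1 (m + 1)) x C fun i hi => hx i (Finset.mem_Icc.1 hi).1
  exact hsum.trans_le hle

theorem one_div_sub_one_lt_of_one_lt_succ_mul {C m : ℝ} (hC : 0 < C) (h : 1 < (m + 1) * C) :
    1 / C - 1 < m := by
  rw [sub_lt_iff_lt_add, div_lt_iff₀ hC]
  exact h

theorem one_div_lt_div_sub_of_div_sub_one_lt {a lam m : ℝ} (hlam : 0 < lam) (ha : lam < a)
    (hm : a / lam - 1 < m) : 1 / m < lam / (a - lam) := by
  have hpos : 0 < (a - lam) / lam := div_pos (sub_pos.2 ha) hlam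
  have hlt : (a - lam) / lam < m := by rwa [sub_div, div_self hlam.ne']
  simpa only [one_div_div] using one_div_lt_one_div_of_lt hpos hlt

theorem stmt_0_general
    {Ω : Type*} [MeasurableSpace Ω] (μ : Measure Ω) [IsProbabilityMeasure μ]
    (ρ lam : ℝ) (n : ℕ)
    (hρ0 : 0 ≤ ρ) (hρ1 : ρ < 1) (hlam : 1 < lam) (hn : 0 < n)
    (Y X S : ℕ → Ω → ℝ) (M : Ω → ℕ)
    (hYbd : ∀ i, ∀ᵐ ω ∂μ, 0 < Y i ω ∧ Y i ω ≤ lam / n)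
    (hX1 : ∀ ω, X 1 ω = Y 1 ω)
    (hXrec : ∀ i, 2 ≤ i → ∀ ω, X i ω = ρ * X (i - 1) ω + Y i ω)
    (hS : ∀ m ω, S m ω = ∑ i ∈ Finset.Icc 1 m, X i ω)
    (hM : ∀ᵐ ω ∂μ, S (M ω) ω ≤ 1 ∧ 1 < S (M ω + 1) ω) :
    (∀ᵐ ω ∂μ, (n : ℝ) * (1 - ρ) / lam - 1 < (M ω : ℝ)) ∧
    (lam < (n : ℝ) * (1 - ρ) →
      (∀ᵐ ω ∂μ, 1 / (M ω : ℝ) < lam / ((n : ℝ) * (1 - ρ) - lam)) ∧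
      ∫ ω, 1 / (M ω : ℝ) ∂μ ≤ lam / ((n : ℝ) * (1 - ρ) - lam)) := by
  have hlam0 : 0 < lam := one_pos.trans hlam
  have hb : 0 ≤ lam / n := by positivity
  have hC : 0 < lam / n / (1 - ρ) := div_pos (by positivity) (sub_pos.2 hρ1)
  have hlower : ∀ᵐ ω ∂μ, (n : ℝ) * (1 - ρ) / lam - 1 < (M ω : ℝ) := by
    filter_upwards [hM, ae_all_iff.2 hYbd] with ω hMω hYω
    have hXle := le_div_one_sub_of_eq_mul_add (x := (X · ω)) hρ0 hρ1 hb
      ((hX1 ω).trans_le (hYω 1).2) (fun i => (hYω i).2) (fun i hi => hXrec i hi ω)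
    have hsucc := one_lt_succ_mul_of_one_lt_sum_Icc hXle ((hS _ ω) ▸ hMω.2)
    simpa only [div_div, one_div_div] using one_div_sub_one_lt_of_one_lt_succ_mul hC hsucc
  refine ⟨hlower, fun hcond => ?_⟩
  have hrecip : ∀ᵐ ω ∂μ, 1 / (M ω : ℝ) < lam / ((n : ℝ) * (1 - ρ) - lam) :=
    hlower.mono fun ω hω => one_div_lt_div_sub_of_div_sub_one_lt hlam0 hcond hω
  refine ⟨hrecip, ?_⟩
  calc ∫ ω, 1 / (M ω : ℝ) ∂μ ≤ ∫ _ω, lam / ((n : ℝ) * (1 - ρ) - lam) ∂μ :=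
        integral_mono_of_nonneg (ae_of_all _ fun ω => by positivity) (integrable_const _)
          (hrecip.mono fun ω hω => hω.le)
    _ = lam / ((n : ℝ) * (1 - ρ) - lam) := by simp

theorem stmt_0
    {Ω : Type*} [MeasurableSpace Ω] (μ : Measure Ω) [IsProbabilityMeasure μ]
    (ρ lam : ℝ) (n : ℕ)
    (hρ0 : 0 ≤ ρ) (hρ1 : ρ < 1) (hlam : 1 < lam) (hn : 0 < n)
    (Y X S : ℕ → Ω → ℝ) (M : Ω → ℕ)
    (hYmeas : ∀ i, Measurable (Y i))
    (hYindep : iIndepFun Y μ)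
    (hYident : ∀ i, IdentDistrib (Y i) (Y 1) μ μ)
    (hYbd : ∀ i, ∀ᵐ ω ∂μ, 0 < Y i ω ∧ Y i ω ≤ lam / n)
    (hYmean : ∀ i, ∫ ω, Y i ω ∂μ = 1 / n)
    (hX1 : ∀ ω, X 1 ω = Y 1 ω)
    (hXrec : ∀ i, 2 ≤ i → ∀ ω, X i ω = ρ * X (i - 1) ω + Y i ω)
    (hS : ∀ m ω, S m ω = ∑ i ∈ Finset.Icc 1 m, X i ω)
    (hMmeas : Measurable M)
    (hM : ∀ᵐ ω ∂μ, S (M ω) ω ≤ 1 ∧ 1 < S (M ω + 1) ω) :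
    (∀ᵐ ω ∂μ, (n : ℝ) * (1 - ρ) / lam - 1 < (M ω : ℝ)) ∧
    (lam < (n : ℝ) * (1 - ρ) →
      (∀ᵐ ω ∂μ, 1 / (M ω : ℝ) < lam / ((n : ℝ) * (1 - ρ) - lam)) ∧
      ∫ ω, 1 / (M ω : ℝ) ∂μ ≤ lam / ((n : ℝ) * (1 - ρ) - lam)) :=
  stmt_0_general μ ρ lam n hρ0 hρ1 hlam hn Y X S M hYbd hX1 hXrec hS hM
end

section
/- The expectation of the overshoot location satisfies the upper bound E[S_{M+1}] ≤ (E[M] + 1)/(n(1 − ρ)). -/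
open MeasureTheory ProbabilityTheory Real

open Finset
open scoped ENNReal

/-!
Since `ρ ≥ 0` and `Yᵢ > 0`, the recursion gives `Xᵢ ≥ Yᵢ > 0`, and summing it gives
`Sₘ = ρ Sₘ₋₁ + Wₘ` with `Wₘ = Y₁ + ⋯ + Yₘ`; hence `S` is increasing and
`Wₘ ≤ Sₘ ≤ Wₘ / (1 - ρ)`. Monotonicity turns `{M + 1 > j}` into `{Sⱼ ≤ 1}`, an event of
`Y₁, …, Yⱼ`, so `M + 1` is a stopping time of the independent sequence `Y` and Wald's identity
gives `E[W_{M+1}] = E[M + 1] / n`.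

Everything is computed with lower Lebesgue integrals, so no bound on `E[M]` is needed: if
`E[M] = ∞` then `S_{M+1}` is not integrable and its Bochner integral is `0`.
-/

structure IsAutoregressive (ρ : ℝ) (y x : ℕ → ℝ) : Prop where
  one : x 1 = y 1
  succ : ∀ i, 1 ≤ i → x (i + 1) = ρ * x i + y (i + 1)

namespace IsAutoregressive

variable {ρ : ℝ} {y x : ℕ → ℝ}

theorem sum_Icc_succ (h : IsAutoregressive ρ y x) (m : ℕ) :
    ∑ i ∈ Icc 1 (m + 1), x i = ρ * ∑ i ∈ Icc 1 m, x i + ∑ i ∈ Icc 1 (m + 1), y i := by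
  induction m with
  | zero => simp [h.one]
  | succ m ih =>
    rw [sum_Icc_succ_top (by omega : 1 ≤ m + 1 + 1) x, sum_Icc_succ_top (by omega) y,
      h.succ (m + 1) (by omega)]
    linear_combination ih - ρ * sum_Icc_succ_top (by omega : 1 ≤ m + 1) x

variable (h : IsAutoregressive ρ y x) (hρ : 0 ≤ ρ) (hy : ∀ i, 0 ≤ y i)
include h hρ hy

theorem input_le {i : ℕ} (hi : 1 ≤ i) : y i ≤ x i := by
  induction i, hi using Nat.le_induction with
  | base => exact h.one.ge
  | succ i hi ih =>
    rw [h.succ i hi]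
    nlinarith [hy i]

theorem sum_input_le_sum (m : ℕ) : ∑ i ∈ Icc 1 m, y i ≤ ∑ i ∈ Icc 1 m, x i :=
  sum_le_sum fun _ hi => h.input_le hρ hy (mem_Icc.1 hi).1

theorem monotone_sum : Monotone fun m => ∑ i ∈ Icc 1 m, x i := fun _ _ hab =>
  sum_le_sum_of_subset_of_nonneg (Icc_subset_Icc_right hab) fun i hi _ =>
    (hy i).trans (h.input_le hρ hy (mem_Icc.1 hi).1)

theorem one_sub_mul_sum_le (m : ℕ) : (1 - ρ) * ∑ i ∈ Icc 1 m, x i ≤ ∑ i ∈ Icc 1 m, y i := by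
  cases m with
  | zero => simp
  | succ m =>
    have hmono : ∑ i ∈ Icc 1 m, x i ≤ ∑ i ∈ Icc 1 (m + 1), x i :=
      h.monotone_sum hρ hy m.le_succ
    nlinarith [h.sum_Icc_succ m, mul_le_mul_of_nonneg_left hmono hρ]

end IsAutoregressive

theorem measurable_sum_Icc_of_isAutoregressive {Ω : Type*} {mΩ : MeasurableSpace Ω}
    (ℱ : Filtration ℕ mΩ) {ρ : ℝ} {X Y : ℕ → Ω → ℝ} (hY : ∀ i, Measurable[ℱ i] (Y i))
    (hX : ∀ ω, IsAutoregressive ρ (Y · ω) (X · ω)) (m : ℕ) :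
    Measurable[ℱ m] fun ω => ∑ i ∈ Icc 1 m, X i ω := by
  have hXmeas : ∀ i, 1 ≤ i → Measurable[ℱ i] (X i) := by
    intro i hi
    induction i, hi using Nat.le_induction with
    | base => simpa only [funext fun ω => (hX ω).one] using hY 1
    | succ i hi ih =>
      rw [funext fun ω => (hX ω).succ i hi]
      exact ((ih.mono (ℱ.mono i.le_succ) le_rfl).const_mul ρ).add (hY (i + 1))
  exact Finset.measurable_sum _ fun i hi =>
    (hXmeas i (mem_Icc.1 hi).1).mono (ℱ.mono (mem_Icc.1 hi).2) le_rfl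

theorem Monotone.le_iff_le_of_le_of_lt_succ {α : Type*} [Preorder α] {s : ℕ → α}
    (hs : Monotone s) {N : ℕ} {t : α} (hN : s N ≤ t) (hN' : t < s (N + 1)) (j : ℕ) :
    s j ≤ t ↔ j ≤ N :=
  ⟨fun hj => not_lt.1 fun hNj => (hN'.trans_le (hs hNj)).not_ge hj, fun hj => (hs hj).trans hN⟩

theorem tsum_indicator_eq_sum_range {α β : Type*} [AddCommMonoid β] [TopologicalSpace β]
    {s : ℕ → Set α} {N : ℕ} {a : α} (hs : ∀ j, a ∈ s j ↔ j ≤ N) (f : ℕ → α → β) :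
    ∑' j, (s j).indicator (f j) a = ∑ j ∈ range (N + 1), f j a := by
  rw [tsum_eq_sum (s := range (N + 1))
    fun j hj => Set.indicator_of_notMem (by simpa [hs, Nat.lt_succ_iff] using hj) _]
  exact sum_congr rfl fun j hj =>
    Set.indicator_of_mem ((hs j).2 (by simpa [Nat.lt_succ_iff] using hj)) _

theorem ProbabilityTheory.iIndepFun.indep_natural_comap {Ω : Type*} {mΩ : MeasurableSpace Ω}
    {μ : Measure Ω} {Y : ℕ → Ω → ℝ} (hind : iIndepFun Y μ) (hY : ∀ i, StronglyMeasurable (Y i))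
    {j k : ℕ} (hjk : j < k) :
    Indep (Filtration.natural Y hY j) (MeasurableSpace.comap (Y k) inferInstance) μ := by
  have := indep_iSup_of_disjoint (fun i => (hY i).measurable.comap_le) hind
    (S := Set.Iic j) (T := {k}) (by simpa using hjk)
  simp only [Set.mem_singleton_iff, iSup_iSup_eq_left] at this
  exact this

section Wald

variable {Ω : Type*} {mΩ : MeasurableSpace Ω} {μ : Measure Ω}
  {ℱ 𝒢 : ℕ → MeasurableSpace Ω} {A : ℕ → Set Ω} {Z : ℕ → Ω → ℝ≥0∞}

theorem lintegral_tsum_indicator_eq_tsum_measure_mul (hℱ : ∀ j, ℱ j ≤ mΩ) (h𝒢 : ∀ j, 𝒢 j ≤ mΩ)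
    (hind : ∀ j, Indep (ℱ j) (𝒢 j) μ) (hA : ∀ j, MeasurableSet[ℱ j] (A j))
    (hZ : ∀ j, Measurable[𝒢 j] (Z j)) :
    ∫⁻ ω, ∑' j, (A j).indicator (Z j) ω ∂μ = ∑' j, μ (A j) * ∫⁻ ω, Z j ω ∂μ := by
  rw [lintegral_tsum fun j =>
    ((hZ j).mono (h𝒢 j) le_rfl).indicator (hℱ j _ (hA j)) |>.aemeasurable]
  refine tsum_congr fun j => ?_
  have hmul : (A j).indicator (Z j) = fun ω => (A j).indicator (fun _ => 1) ω * Z j ω := by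
    funext ω
    by_cases h : ω ∈ A j <;> simp [h]
  rw [hmul, lintegral_mul_eq_lintegral_mul_lintegral_of_independent_measurableSpace (hℱ j) (h𝒢 j)
    (hind j) (measurable_const.indicator (hA j)) (hZ j),
    lintegral_indicator_const (hℱ j _ (hA j)), one_mul]

theorem lintegral_sum_range_add_one_eq_mul [IsProbabilityMeasure μ] (hℱ : ∀ j, ℱ j ≤ mΩ)
    (h𝒢 : ∀ j, 𝒢 j ≤ mΩ) (hind : ∀ j, Indep (ℱ j) (𝒢 j) μ) (hA : ∀ j, MeasurableSet[ℱ j] (A j))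
    (hZ : ∀ j, Measurable[𝒢 j] (Z j)) {c : ℝ≥0∞} (hc : ∀ j, ∫⁻ ω, Z j ω ∂μ = c) {N : Ω → ℕ}
    (hAN : ∀ᵐ ω ∂μ, ∀ j, ω ∈ A j ↔ j ≤ N ω) :
    ∫⁻ ω, ∑ j ∈ range (N ω + 1), Z j ω ∂μ = (∫⁻ ω, (N ω : ℝ≥0∞) ∂μ + 1) * c := by
  have hcount : ∑' j, μ (A j) = ∫⁻ ω, (N ω : ℝ≥0∞) ∂μ + 1 := by
    -- the case `Z = 1` of Wald's identity: the tail-sum formula for `E[N + 1]`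
    have := lintegral_tsum_indicator_eq_tsum_measure_mul (μ := μ) (Z := fun _ _ => 1) hℱ
      (fun _ => bot_le) (fun _ => indep_bot_right _) hA (fun _ => measurable_const)
    simp only [lintegral_const, measure_univ, mul_one] at this
    rw [← this]
    calc ∫⁻ ω, ∑' j, (A j).indicator (fun _ => 1) ω ∂μ = ∫⁻ ω, ((N ω : ℝ≥0∞) + 1) ∂μ :=
          lintegral_congr_ae <| hAN.mono fun ω h => by simp [tsum_indicator_eq_sum_range h]
      _ = ∫⁻ ω, (N ω : ℝ≥0∞) ∂μ + 1 := by simp [lintegral_add_right _ measurable_const]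
  calc ∫⁻ ω, ∑ j ∈ range (N ω + 1), Z j ω ∂μ = ∫⁻ ω, ∑' j, (A j).indicator (Z j) ω ∂μ :=
        lintegral_congr_ae <| hAN.mono fun ω h => (tsum_indicator_eq_sum_range h _).symm
    _ = ∑' j, μ (A j) * c := by
        rw [lintegral_tsum_indicator_eq_tsum_measure_mul hℱ h𝒢 hind hA hZ]
        simp only [hc]
    _ = (∫⁻ ω, (N ω : ℝ≥0∞) ∂μ + 1) * c := by rw [ENNReal.tsum_mul_right, hcount]

theorem lintegral_sum_Icc_ofReal_eq_mul_of_iIndepFun [IsProbabilityMeasure μ] {Y : ℕ → Ω → ℝ}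
    (hY : ∀ i, Measurable (Y i)) (hind : iIndepFun Y μ) {c : ℝ≥0∞}
    (hc : ∀ i, ∫⁻ ω, ENNReal.ofReal (Y i ω) ∂μ = c)
    (hA : ∀ j, MeasurableSet[Filtration.natural Y (fun i => (hY i).stronglyMeasurable) j] (A j))
    {N : Ω → ℕ} (hAN : ∀ᵐ ω ∂μ, ∀ j, ω ∈ A j ↔ j ≤ N ω) :
    ∫⁻ ω, ∑ i ∈ Icc 1 (N ω + 1), ENNReal.ofReal (Y i ω) ∂μ
      = (∫⁻ ω, (N ω : ℝ≥0∞) ∂μ + 1) * c := by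
  have hshift : ∀ ω, ∑ i ∈ Icc 1 (N ω + 1), ENNReal.ofReal (Y i ω)
      = ∑ j ∈ range (N ω + 1), ENNReal.ofReal (Y (j + 1) ω) := fun ω => by
    rw [range_eq_Ico, sum_Ico_add' fun i => ENNReal.ofReal (Y i ω), zero_add,
      Ico_add_one_right_eq_Icc]
  simp_rw [hshift]
  exact lintegral_sum_range_add_one_eq_mul (Filtration.le _)
    (𝒢 := fun j => MeasurableSpace.comap (Y (j + 1)) inferInstance) (fun j => (hY _).comap_le)
    (fun j => hind.indep_natural_comap _ j.lt_succ_self) hA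
    (fun j => ENNReal.measurable_ofReal.comp (comap_measurable _)) (fun j => hc (j + 1)) hAN

end Wald

theorem integral_le_mul_toReal_lintegral {Ω : Type*} {mΩ : MeasurableSpace Ω} {μ : Measure Ω}
    {f g : Ω → ℝ} {c : ℝ} (hc : 0 ≤ c) (hf : AEStronglyMeasurable f μ) (hg : 0 ≤ᵐ[μ] g)
    (hgf : g ≤ᵐ[μ] f) (hfg : f ≤ᵐ[μ] fun ω => c * g ω) :
    ∫ ω, f ω ∂μ ≤ c * (∫⁻ ω, ENNReal.ofReal (g ω) ∂μ).toReal := by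
  rw [integral_eq_lintegral_of_nonneg_ae (hg.trans hgf) hf]
  by_cases htop : ∫⁻ ω, ENNReal.ofReal (g ω) ∂μ = ∞
  · have : ∫⁻ ω, ENNReal.ofReal (f ω) ∂μ = ∞ :=
      top_unique (htop ▸ lintegral_mono_ae (hgf.mono fun ω h => ENNReal.ofReal_le_ofReal h))
    simp [this, htop]
  · calc (∫⁻ ω, ENNReal.ofReal (f ω) ∂μ).toReal
        ≤ (∫⁻ ω, ENNReal.ofReal c * ENNReal.ofReal (g ω) ∂μ).toReal := by
          refine ENNReal.toReal_mono ?_ (lintegral_mono_ae (hfg.mono fun ω h => ?_))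
          · rw [lintegral_const_mul' _ _ ENNReal.ofReal_ne_top]
            exact ENNReal.mul_ne_top ENNReal.ofReal_ne_top htop
          · rw [← ENNReal.ofReal_mul hc]
            exact ENNReal.ofReal_le_ofReal h
      _ = c * (∫⁻ ω, ENNReal.ofReal (g ω) ∂μ).toReal := by
          rw [lintegral_const_mul' _ _ ENNReal.ofReal_ne_top, ENNReal.toReal_mul,
            ENNReal.toReal_ofReal hc]

theorem integral_natCast_eq_toReal_lintegral {Ω : Type*} {mΩ : MeasurableSpace Ω}
    {μ : Measure Ω} {N : Ω → ℕ} (hN : Measurable N) :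
    ∫ ω, (N ω : ℝ) ∂μ = (∫⁻ ω, (N ω : ℝ≥0∞) ∂μ).toReal := by
  simpa using integral_toReal (measurable_from_nat.comp hN).aemeasurable
    (ae_of_all μ fun ω => ENNReal.natCast_lt_top (N ω))

theorem ENNReal.toReal_add_one_mul_ofReal_le (a : ℝ≥0∞) {b : ℝ} (hb : 0 ≤ b) :
    ((a + 1) * ENNReal.ofReal b).toReal ≤ (a.toReal + 1) * b := by
  rw [ENNReal.toReal_mul, ENNReal.toReal_ofReal hb]
  gcongr
  simpa using ENNReal.toReal_add_le (a := a) (b := 1)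

theorem stmt_4_general
    {Ω : Type*} [MeasurableSpace Ω] (μ : Measure Ω) [IsProbabilityMeasure μ]
    (ρ lam : ℝ) (n : ℕ)
    (hρ0 : 0 ≤ ρ) (hρ1 : ρ < 1) (hn : 0 < n)
    (Y X S : ℕ → Ω → ℝ) (M : Ω → ℕ)
    (hYmeas : ∀ i, Measurable (Y i))
    (hYindep : iIndepFun (m := fun _ : ℕ => (inferInstance : MeasurableSpace ℝ)) Y μ)
    (hYbd : ∀ i, ∀ᵐ ω ∂μ, 0 < Y i ω ∧ Y i ω ≤ lam / n)
    (hYmean : ∀ i, ∫ ω, Y i ω ∂μ = 1 / n)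
    (hX1 : ∀ ω, X 1 ω = Y 1 ω)
    (hXrec : ∀ i, 2 ≤ i → ∀ ω, X i ω = ρ * X (i - 1) ω + Y i ω)
    (hS : ∀ m ω, S m ω = ∑ i ∈ Finset.Icc 1 m, X i ω)
    (hMmeas : Measurable M)
    (hM : ∀ᵐ ω ∂μ, S (M ω) ω ≤ 1 ∧ 1 < S (M ω + 1) ω) :
    ∫ ω, S (M ω + 1) ω ∂μ ≤ ((∫ ω, (M ω : ℝ) ∂μ) + 1) / ((n : ℝ) * (1 - ρ)) := by
  have h1ρ : 0 < 1 - ρ := by linarith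
  have hAR : ∀ ω, IsAutoregressive ρ (Y · ω) (X · ω) := fun ω =>
    ⟨hX1 ω, fun i _ => by simpa using hXrec (i + 1) (by omega) ω⟩
  set ℱ := Filtration.natural Y fun i => (hYmeas i).stronglyMeasurable
  have hSadapted : ∀ m, Measurable[ℱ m] (S m) := fun m => by
    simpa only [← funext (hS m)] using measurable_sum_Icc_of_isAutoregressive ℱ
      (fun i => (Filtration.stronglyAdapted_natural (u := Y) _ i).measurable) hAR m
  have hgood : ∀ᵐ ω ∂μ, (∀ i, 0 ≤ Y i ω) ∧ ∀ j, S j ω ≤ 1 ↔ j ≤ M ω := by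
    filter_upwards [ae_all_iff.2 hYbd, hM] with ω hY ⟨hle, hlt⟩
    have hY0 : ∀ i, 0 ≤ Y i ω := fun i => (hY i).1.le
    have hmono : Monotone (S · ω) := by
      simpa only [hS] using (hAR ω).monotone_sum hρ0 hY0
    exact ⟨hY0, hmono.le_iff_le_of_le_of_lt_succ hle hlt⟩
  have hWald : ∫⁻ ω, ENNReal.ofReal (∑ i ∈ Icc 1 (M ω + 1), Y i ω) ∂μ
      = (∫⁻ ω, (M ω : ℝ≥0∞) ∂μ + 1) * ENNReal.ofReal (1 / n) := by
    rw [← lintegral_sum_Icc_ofReal_eq_mul_of_iIndepFun hYmeas hYindep (fun i => ?_)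
      (fun j => hSadapted j measurableSet_Iic) (hgood.mono fun ω h => h.2)]
    · exact lintegral_congr_ae <| hgood.mono fun ω h =>
        ENNReal.ofReal_sum_of_nonneg fun i _ => h.1 i
    · have hint : Integrable (Y i) μ := .of_integral_ne_zero (by rw [hYmean]; positivity)
      rw [← ofReal_integral_eq_lintegral_ofReal hint ((hYbd i).mono fun ω h => h.1.le), hYmean]
  have hT : Measurable fun ω => S (M ω + 1) ω :=
    (measurable_from_prod_countable_left (f := fun p : Ω × ℕ => S (p.2 + 1) p.1) fun m =>
      (hSadapted (m + 1)).mono (ℱ.le _) le_rfl).comp (measurable_id.prodMk hMmeas)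
  calc ∫ ω, S (M ω + 1) ω ∂μ
      ≤ (1 - ρ)⁻¹ * (∫⁻ ω, ENNReal.ofReal (∑ i ∈ Icc 1 (M ω + 1), Y i ω) ∂μ).toReal := by
        refine integral_le_mul_toReal_lintegral (inv_nonneg.2 h1ρ.le) hT.aestronglyMeasurable
          (hgood.mono fun ω h => sum_nonneg fun i _ => h.1 i) (hgood.mono fun ω h => ?_)
          (hgood.mono fun ω h => ?_)
        · simpa only [hS] using (hAR ω).sum_input_le_sum hρ0 h.1 (M ω + 1)
        · simpa only [hS, le_inv_mul_iff₀ h1ρ] using (hAR ω).one_sub_mul_sum_le hρ0 h.1 (M ω + 1)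
    _ ≤ (1 - ρ)⁻¹ * (((∫ ω, (M ω : ℝ) ∂μ) + 1) * (1 / n)) := by
        rw [hWald, integral_natCast_eq_toReal_lintegral hMmeas]
        gcongr
        exact ENNReal.toReal_add_one_mul_ofReal_le _ (by positivity)
    _ = ((∫ ω, (M ω : ℝ) ∂μ) + 1) / ((n : ℝ) * (1 - ρ)) := by
        field_simp

theorem stmt_4
    {Ω : Type*} [MeasurableSpace Ω] (μ : Measure Ω) [IsProbabilityMeasure μ]
    (ρ lam : ℝ) (n : ℕ)
    (hρ0 : 0 ≤ ρ) (hρ1 : ρ < 1) (hlam : 1 < lam) (hn : 0 < n)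
    (Y X S : ℕ → Ω → ℝ) (M : Ω → ℕ)
    (hYmeas : ∀ i, Measurable (Y i))
    (hYindep : iIndepFun (m := fun _ : ℕ => (inferInstance : MeasurableSpace ℝ)) Y μ)
    (hYident : ∀ i, IdentDistrib (Y i) (Y 1) μ μ)
    (hYbd : ∀ i, ∀ᵐ ω ∂μ, 0 < Y i ω ∧ Y i ω ≤ lam / n)
    (hYmean : ∀ i, ∫ ω, Y i ω ∂μ = 1 / n)
    (hX1 : ∀ ω, X 1 ω = Y 1 ω)
    (hXrec : ∀ i, 2 ≤ i → ∀ ω, X i ω = ρ * X (i - 1) ω + Y i ω)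
    (hS : ∀ m ω, S m ω = ∑ i ∈ Finset.Icc 1 m, X i ω)
    (hMmeas : Measurable M)
    (hM : ∀ᵐ ω ∂μ, S (M ω) ω ≤ 1 ∧ 1 < S (M ω + 1) ω) :
    ∫ ω, S (M ω + 1) ω ∂μ ≤ ((∫ ω, (M ω : ℝ) ∂μ) + 1) / ((n : ℝ) * (1 - ρ)) :=
  stmt_4_general μ ρ lam n hρ0 hρ1 hn Y X S M hYmeas hYindep hYbd hYmean hX1 hXrec hS hMmeas hM
end

section
/- The expected number of samples taken over the interval [0,1] obeys the two-sided bound n(1 − ρ) − 1 ≤ E[M] ≤ n + λ/(1 − ρ) − 1. -/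
/-!
Put `T = M + 1`. Since the `X_i` are positive, `T > i` exactly when `S_i ≤ 1`, and `S_i` is a
linear combination of `Y_1, …, Y_i`; so the event `{T > i}` is independent of `Y_{i+1}` and Wald's
identity gives `E[Y_1 + ⋯ + Y_T] = E[T] / n`. Unrolling the recursion,
`Y_1 + ⋯ + Y_m = (1 - ρ) S_m + ρ X_m`, while `0 < X_m ≤ λ / (n (1 - ρ))`. At `m = T` the crossing
`S_M ≤ 1 < S_{M+1}` therefore pins `Y_1 + ⋯ + Y_T` between `1 - ρ` and `1 - ρ + λ / (n (1 - ρ))`.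
Wald's identity for nonnegative summands holds in `[0, ∞]`, so the integrability of `T` comes out
of the upper bound instead of being needed for it.
-/

open MeasureTheory ProbabilityTheory Real
open scoped ENNReal

structure ARRecursion (ρ : ℝ) (y x : ℕ → ℝ) : Prop where
  zero : x 0 = y 0
  succ : ∀ i, x (i + 1) = ρ * x i + y (i + 1)

namespace ARRecursion

variable {ρ b : ℝ} {y x : ℕ → ℝ}

theorem pos (h : ARRecursion ρ y x) (hρ : 0 ≤ ρ) (hy : ∀ i, 0 < y i) : ∀ i, 0 < x i
  | 0 => h.zero ▸ hy 0
  | i + 1 => by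
    have := h.pos hρ hy i
    have := hy (i + 1)
    rw [h.succ]
    positivity

theorem le_div_one_sub (h : ARRecursion ρ y x) (hρ0 : 0 ≤ ρ) (hρ1 : ρ < 1) (hb : 0 ≤ b)
    (hy : ∀ i, y i ≤ b) : ∀ i, x i ≤ b / (1 - ρ)
  | 0 => by
    rw [h.zero, le_div_iff₀ (by linarith)]
    nlinarith [hy 0]
  | i + 1 => by
    have hρx := mul_le_mul_of_nonneg_left (h.le_div_one_sub hρ0 hρ1 hb hy i) hρ0
    have hb' : (1 - ρ) * (b / (1 - ρ)) = b := mul_div_cancel₀ b (by linarith)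
    rw [h.succ]
    linarith [hy (i + 1)]

theorem eq_sum_pow_mul (h : ARRecursion ρ y x) :
    ∀ i, x i = ∑ k ∈ Finset.range (i + 1), ρ ^ (i - k) * y k
  | 0 => by simp [h.zero]
  | i + 1 => by
    rw [h.succ, h.eq_sum_pow_mul i, Finset.mul_sum, Finset.sum_range_succ _ (i + 1)]
    congr 1
    · refine Finset.sum_congr rfl fun k hk => ?_
      rw [← mul_assoc, ← pow_succ', Nat.sub_add_comm (Finset.mem_range_succ_iff.mp hk)]
    · simp

theorem sum_range_eq_sum_mul (h : ARRecursion ρ y x) (m : ℕ) :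
    ∑ i ∈ Finset.range m, x i
      = ∑ k ∈ Finset.range m, (∑ i ∈ Finset.Ico k m, ρ ^ (i - k)) * y k := by
  simp_rw [h.eq_sum_pow_mul, Finset.range_eq_Ico, ← Finset.sum_Ico_Ico_comm, Finset.sum_mul]

theorem sum_range_succ_y_eq (h : ARRecursion ρ y x) :
    ∀ m, ∑ i ∈ Finset.range (m + 1), y i
      = (1 - ρ) * ∑ i ∈ Finset.range (m + 1), x i + ρ * x m
  | 0 => by simp [h.zero]; ring
  | m + 1 => by
    rw [Finset.sum_range_succ y, h.sum_range_succ_y_eq m, Finset.sum_range_succ x (m + 1),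
      h.succ]
    ring

theorem sum_range_le_iff (h : ARRecursion ρ y x) (hρ : 0 ≤ ρ) (hy : ∀ i, 0 < y i) {m : ℕ}
    {t : ℝ} (hm : ∑ i ∈ Finset.range m, x i ≤ t) (hm' : t < ∑ i ∈ Finset.range (m + 1), x i)
    (i : ℕ) : ∑ j ∈ Finset.range i, x j ≤ t ↔ i ≤ m :=
  have hmono : Monotone fun k => ∑ j ∈ Finset.range k, x j :=
    (Finset.sum_mono_set_of_nonneg fun j => (h.pos hρ hy j).le).comp Finset.range_mono
  ⟨fun hi => not_lt.mp fun hmi => (hm'.trans_le (hmono hmi)).not_ge hi,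
    fun hi => (hmono hi).trans hm⟩

theorem sum_range_succ_mem_Icc (h : ARRecursion ρ y x) (hρ0 : 0 ≤ ρ) (hρ1 : ρ < 1)
    (hy : ∀ i, 0 < y i ∧ y i ≤ b) {m : ℕ} {t : ℝ} (hm : ∑ i ∈ Finset.range m, x i ≤ t)
    (hm' : t < ∑ i ∈ Finset.range (m + 1), x i) :
    ∑ i ∈ Finset.range (m + 1), y i ∈ Set.Icc ((1 - ρ) * t) ((1 - ρ) * t + b / (1 - ρ)) := by
  have hx := h.pos hρ0 (fun i => (hy i).1) m
  have hxb := h.le_div_one_sub hρ0 hρ1 ((hy 0).1.le.trans (hy 0).2) (fun i => (hy i).2) m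
  rw [h.sum_range_succ_y_eq m]
  rw [Finset.sum_range_succ] at hm' ⊢
  constructor <;> nlinarith

end ARRecursion

section

variable {Ω : Type*} [MeasurableSpace Ω] {μ : Measure Ω}

theorem ProbabilityTheory.iIndepFun.indepFun_sum_const_mul {ι : Type*} [DecidableEq ι]
    {Y : ι → Ω → ℝ} (hY : iIndepFun Y μ) (hmeas : ∀ i, Measurable (Y i)) (c : ι → ℝ)
    {s : Finset ι} {j : ι} (hj : j ∉ s) :
    IndepFun (fun ω => ∑ k ∈ s, c k * Y k ω) (Y j) μ := by
  -- rescale every coordinate except `j`, so that the rescaled family still contains `Y j` itself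
  set c' := Function.update c j 1
  have h := (hY.comp (fun k x => c' k * x) fun k => measurable_const_mul (c' k)
    ).indepFun_finsetSum_of_notMem (fun k => (hmeas k).const_mul (c' k)) hj
  convert h using 1
  · ext ω
    rw [Finset.sum_apply]
    refine Finset.sum_congr rfl fun k hk => ?_
    simp [c', Function.update_of_ne (ne_of_mem_of_not_mem hk hj)]
  · ext ω
    simp [c']

theorem indepFun_sum_range_of_arRecursion {ρ : ℝ} {Y X : ℕ → Ω → ℝ} (hY : iIndepFun Y μ)
    (hmeas : ∀ i, Measurable (Y i)) (hX : ∀ ω, ARRecursion ρ (Y · ω) (X · ω)) (m : ℕ) :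
    IndepFun (fun ω => ∑ i ∈ Finset.range m, X i ω) (Y m) μ := by
  simp_rw [fun ω => (hX ω).sum_range_eq_sum_mul m]
  exact hY.indepFun_sum_const_mul hmeas _ Finset.notMem_range_self

theorem lintegral_sum_range_eq_tsum {g : ℕ → Ω → ℝ≥0∞} {T : Ω → ℕ} (hT : Measurable T)
    (hg : ∀ i, AEMeasurable (g i) μ) :
    ∫⁻ ω, ∑ i ∈ Finset.range (T ω), g i ω ∂μ
      = ∑' i, ∫⁻ ω, {ω | i < T ω}.indicator 1 ω * g i ω ∂μ := by
  rw [← lintegral_tsum (f := fun i ω => {ω | i < T ω}.indicator (1 : Ω → ℝ≥0∞) ω * g i ω)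
    fun i => (aemeasurable_one.indicator (measurableSet_lt measurable_const hT)).mul (hg i)]
  refine lintegral_congr fun ω => ?_
  rw [tsum_eq_sum (s := Finset.range (T ω)) fun i hi => by simp_all]
  exact Finset.sum_congr rfl fun i hi => by simp_all

/-- Wald's identity. -/
theorem lintegral_sum_range_eq_mul_lintegral {g : ℕ → Ω → ℝ≥0∞} {T : Ω → ℕ} {c : ℝ≥0∞}
    (hT : Measurable T) (hg : ∀ i, Measurable (g i)) (hmean : ∀ i, ∫⁻ ω, g i ω ∂μ = c)
    (hind : ∀ i, IndepFun ({ω | i < T ω}.indicator (1 : Ω → ℝ≥0∞)) (g i) μ) :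
    ∫⁻ ω, ∑ i ∈ Finset.range (T ω), g i ω ∂μ = c * ∫⁻ ω, (T ω : ℝ≥0∞) ∂μ := by
  have hA : ∀ i, Measurable ({ω | i < T ω}.indicator (1 : Ω → ℝ≥0∞)) := fun i =>
    measurable_one.indicator (measurableSet_lt measurable_const hT)
  calc ∫⁻ ω, ∑ i ∈ Finset.range (T ω), g i ω ∂μ
      = ∑' i, ∫⁻ ω, {ω | i < T ω}.indicator 1 ω * g i ω ∂μ :=
        lintegral_sum_range_eq_tsum hT fun i => (hg i).aemeasurable
    _ = ∑' i, c * ∫⁻ ω, {ω | i < T ω}.indicator 1 ω * 1 ∂μ := by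
        congr 1 with i
        rw [lintegral_mul_eq_lintegral_mul_lintegral_of_indepFun'' (hA i).aemeasurable
          (hg i).aemeasurable (hind i), hmean i]
        simp [mul_comm]
    _ = c * ∫⁻ ω, (T ω : ℝ≥0∞) ∂μ := by
        rw [ENNReal.tsum_mul_left, ← lintegral_sum_range_eq_tsum hT fun _ => aemeasurable_const]
        simp

theorem lintegral_ofReal_sum_range_eq_mul_lintegral {Z : ℕ → Ω → ℝ} {T : Ω → ℕ} {a : ℝ}
    (ha : 0 < a) (hT : Measurable T) (hZ : ∀ i, Measurable (Z i)) (hZnn : ∀ i, 0 ≤ᵐ[μ] Z i)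
    (hmean : ∀ i, ∫ ω, Z i ω ∂μ = a)
    (hind : ∀ i, IndepFun ({ω | i < T ω}.indicator (1 : Ω → ℝ)) (Z i) μ) :
    ∫⁻ ω, ENNReal.ofReal (∑ i ∈ Finset.range (T ω), Z i ω) ∂μ
      = ENNReal.ofReal a * ∫⁻ ω, (T ω : ℝ≥0∞) ∂μ := by
  rw [← lintegral_sum_range_eq_mul_lintegral hT (fun i => (hZ i).ennreal_ofReal)
    (fun i => ?_) (fun i => ?_)]
  · refine lintegral_congr_ae ?_
    filter_upwards [ae_all_iff.2 hZnn] with ω hω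
    exact ENNReal.ofReal_sum_of_nonneg fun i _ => hω i
  · have hZint : Integrable (Z i) μ := .of_integral_ne_zero (by rw [hmean i]; exact ha.ne')
    rw [← ofReal_integral_eq_lintegral_ofReal hZint (hZnn i), hmean i]
  · refine ((hind i).comp ENNReal.measurable_ofReal ENNReal.measurable_ofReal).congr
      (ae_of_all _ fun ω => ?_) (ae_of_all _ fun _ => rfl)
    by_cases h : i < T ω <;> simp [h]

theorem integrable_and_mul_integral_mem_Icc [IsProbabilityMeasure μ] {Z : ℕ → Ω → ℝ}
    {T : Ω → ℕ} {a L U : ℝ} (ha : 0 < a) (hT : Measurable T) (hZ : ∀ i, Measurable (Z i))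
    (hZnn : ∀ i, 0 ≤ᵐ[μ] Z i) (hmean : ∀ i, ∫ ω, Z i ω ∂μ = a)
    (hind : ∀ i, IndepFun ({ω | i < T ω}.indicator (1 : Ω → ℝ)) (Z i) μ)
    (hW : ∀ᵐ ω ∂μ, ∑ i ∈ Finset.range (T ω), Z i ω ∈ Set.Icc L U) :
    Integrable (fun ω => (T ω : ℝ)) μ ∧ a * ∫ ω, (T ω : ℝ) ∂μ ∈ Set.Icc L U := by
  have hU : 0 ≤ U := by
    obtain ⟨ω, hωW, hωZ⟩ := (hW.and (ae_all_iff.2 hZnn)).exists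
    exact (Finset.sum_nonneg fun i _ => hωZ i).trans hωW.2
  set J := ∫⁻ ω, ENNReal.ofReal (∑ i ∈ Finset.range (T ω), Z i ω) ∂μ
  have hJ : J = ENNReal.ofReal a * ∫⁻ ω, (T ω : ℝ≥0∞) ∂μ :=
    lintegral_ofReal_sum_range_eq_mul_lintegral ha hT hZ hZnn hmean hind
  have hJL : ENNReal.ofReal L ≤ J := by
    simpa using lintegral_mono_ae (μ := μ) (f := fun _ => ENNReal.ofReal L)
      (hW.mono fun ω hω => ENNReal.ofReal_le_ofReal hω.1)
  have hJU : J ≤ ENNReal.ofReal U := by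
    simpa using lintegral_mono_ae (μ := μ) (g := fun _ => ENNReal.ofReal U)
      (hW.mono fun ω hω => ENNReal.ofReal_le_ofReal hω.2)
  have hJtop : J ≠ ⊤ := (hJU.trans_lt ENNReal.ofReal_lt_top).ne
  have hTmeas : AEMeasurable (fun ω => (T ω : ℝ≥0∞)) μ :=
    (Measurable.of_discrete.comp hT).aemeasurable
  have hItop : ∫⁻ ω, (T ω : ℝ≥0∞) ∂μ ≠ ⊤ :=
    (ENNReal.lt_top_of_mul_ne_top_right (hJ ▸ hJtop) (by simpa using ha)).ne
  have hval : a * ∫ ω, (T ω : ℝ) ∂μ = J.toReal := by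
    have := integral_toReal hTmeas (ae_of_all _ fun ω => ENNReal.natCast_lt_top (T ω))
    simp only [ENNReal.toReal_natCast] at this
    rw [this, hJ, ENNReal.toReal_mul, ENNReal.toReal_ofReal ha.le]
  refine ⟨by simpa using integrable_toReal_of_lintegral_ne_top hTmeas hItop, ?_, ?_⟩ <;>
    rw [hval]
  · exact (ENNReal.ofReal_le_iff_le_toReal hJtop).1 hJL
  · exact ENNReal.toReal_le_of_le_ofReal hU hJU

end

theorem stmt_6_general
    {Ω : Type*} [MeasurableSpace Ω] (μ : Measure Ω) [IsProbabilityMeasure μ]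
    (ρ lam : ℝ) (n : ℕ)
    (hρ0 : 0 ≤ ρ) (hρ1 : ρ < 1) (hn : 0 < n)
    (Y X S : ℕ → Ω → ℝ) (M : Ω → ℕ)
    (hYmeas : ∀ i, Measurable (Y i))
    (hYindep : iIndepFun (m := fun _ : ℕ => (inferInstance : MeasurableSpace ℝ)) Y μ)
    (hYbd : ∀ i, ∀ᵐ ω ∂μ, 0 < Y i ω ∧ Y i ω ≤ lam / n)
    (hYmean : ∀ i, ∫ ω, Y i ω ∂μ = 1 / n)
    (hX1 : ∀ ω, X 1 ω = Y 1 ω)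
    (hXrec : ∀ i, 2 ≤ i → ∀ ω, X i ω = ρ * X (i - 1) ω + Y i ω)
    (hS : ∀ m ω, S m ω = ∑ i ∈ Finset.Icc 1 m, X i ω)
    (hMmeas : Measurable M)
    (hM : ∀ᵐ ω ∂μ, S (M ω) ω ≤ 1 ∧ 1 < S (M ω + 1) ω) :
    (n : ℝ) * (1 - ρ) - 1 ≤ ∫ ω, (M ω : ℝ) ∂μ ∧
    ∫ ω, (M ω : ℝ) ∂μ ≤ (n : ℝ) + lam / (1 - ρ) - 1 := by
  have hSrange (m : ℕ) : S m = fun ω => ∑ i ∈ Finset.range m, X (i + 1) ω := by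
    ext ω
    rw [hS, ← Finset.Ico_add_one_right_eq_Icc, Finset.sum_Ico_eq_sum_range]
    simp [add_comm]
  have hAR : ∀ ω, ARRecursion ρ (fun i => Y (i + 1) ω) (fun i => X (i + 1) ω) := fun ω =>
    ⟨hX1 ω, fun i => hXrec (i + 2) (by omega) ω⟩
  have hpath : ∀ᵐ ω ∂μ, (∀ i, S i ω ≤ 1 ↔ i ≤ M ω) ∧
      ∑ i ∈ Finset.range (M ω + 1), Y (i + 1) ω ∈ Set.Icc (1 - ρ) (1 - ρ + lam / n / (1 - ρ)) := by
    filter_upwards [ae_all_iff.2 hYbd, hM] with ω hY hMω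
    simp only [hSrange] at hMω ⊢
    exact ⟨(hAR ω).sum_range_le_iff hρ0 (fun i => (hY _).1) hMω.1 hMω.2, by
      simpa using (hAR ω).sum_range_succ_mem_Icc hρ0 hρ1 (fun i => hY _) hMω.1 hMω.2⟩
  have hind : ∀ i, IndepFun ({ω | i < M ω + 1}.indicator (1 : Ω → ℝ)) (Y (i + 1)) μ := fun i =>
    ((hSrange i ▸ indepFun_sum_range_of_arRecursion (hYindep.precomp (add_left_injective 1))
      (fun k => hYmeas _) hAR i).comp (measurable_one.indicator (measurableSet_Iic (a := 1)))
      measurable_id).congr (by filter_upwards [hpath] with ω hω; simp [Set.indicator_apply, hω.1 i])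
      (ae_of_all _ fun _ => rfl)
  obtain ⟨hint, hlow, hupp⟩ := integrable_and_mul_integral_mem_Icc (T := fun ω => M ω + 1)
    (by positivity : (0 : ℝ) < 1 / n) (Measurable.of_discrete.comp hMmeas) (fun i => hYmeas _)
    (fun i => (hYbd _).mono fun ω h => h.1.le) (fun i => hYmean _) hind (hpath.mono fun ω h => h.2)
  have hMint : Integrable (fun ω => (M ω : ℝ)) μ := by simpa using hint
  push_cast at hlow hupp
  rw [integral_add hMint (integrable_const 1), integral_const, probReal_univ, one_smul]
    at hlow hupp
  have hn' : (0 : ℝ) < n := Nat.cast_pos.mpr hn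
  have hρ' : 1 - ρ ≠ 0 := by linarith
  have hnE : ∫ ω, (M ω : ℝ) ∂μ + 1 = n * (1 / n * (∫ ω, (M ω : ℝ) ∂μ + 1)) := by field_simp
  have hnU : n * (1 - ρ + lam / n / (1 - ρ)) = n * (1 - ρ) + lam / (1 - ρ) := by field_simp
  constructor <;>
    nlinarith [mul_le_mul_of_nonneg_left hlow hn'.le, mul_le_mul_of_nonneg_left hupp hn'.le]

theorem stmt_6
    {Ω : Type*} [MeasurableSpace Ω] (μ : Measure Ω) [IsProbabilityMeasure μ]
    (ρ lam : ℝ) (n : ℕ)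
    (hρ0 : 0 ≤ ρ) (hρ1 : ρ < 1) (hlam : 1 < lam) (hn : 0 < n)
    (Y X S : ℕ → Ω → ℝ) (M : Ω → ℕ)
    (hYmeas : ∀ i, Measurable (Y i))
    (hYindep : iIndepFun (m := fun _ : ℕ => (inferInstance : MeasurableSpace ℝ)) Y μ)
    (hYident : ∀ i, IdentDistrib (Y i) (Y 1) μ μ)
    (hYbd : ∀ i, ∀ᵐ ω ∂μ, 0 < Y i ω ∧ Y i ω ≤ lam / n)
    (hYmean : ∀ i, ∫ ω, Y i ω ∂μ = 1 / n)
    (hX1 : ∀ ω, X 1 ω = Y 1 ω)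
    (hXrec : ∀ i, 2 ≤ i → ∀ ω, X i ω = ρ * X (i - 1) ω + Y i ω)
    (hS : ∀ m ω, S m ω = ∑ i ∈ Finset.Icc 1 m, X i ω)
    (hMmeas : Measurable M)
    (hM : ∀ᵐ ω ∂μ, S (M ω) ω ≤ 1 ∧ 1 < S (M ω + 1) ω) :
    (n : ℝ) * (1 - ρ) - 1 ≤ ∫ ω, (M ω : ℝ) ∂μ ∧
    ∫ ω, (M ω : ℝ) ∂μ ≤ (n : ℝ) + lam / (1 - ρ) - 1 :=
  stmt_6_general μ ρ lam n hρ0 hρ1 hn Y X S M hYmeas hYindep hYbd hYmean hX1 hXrec hS hMmeas hM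
end

section
/- The expected sum of squared intersample distances up to the last sample in [0,1] satisfies E[Σ_{i=1}^{M} X_i²] ≤ (λ/(n(1 − ρ)))² · (E[M] − E[M ρ^M]). -/
/-!
Unwinding the recursion, `X_i = ρ^(i-1) Y_1 + ⋯ + Y_i` lies between `Y_i` and
`c (1 - ρ^i)` with `c = λ / (n (1 - ρ))`. As `(1 - ρ^i)^2 ≤ 1 - ρ^i ≤ 1 - ρ^M` for `i ≤ M`,
the sum of squares is at most `c^2 (M - M ρ^M)` pointwise, and it remains to integrate.
This needs `E[M] < ∞` (the Bochner integral of a non-integrable `M` is `0`): since `X_i ≥ Y_i`,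
on `{M > m}` the first `m + 1` increments sum to at most `1`, so the Chernoff bound with
`E[exp (-Y_1)] < 1` gives `M` a geometric tail.
-/

open MeasureTheory ProbabilityTheory Real

open scoped ENNReal

section Sequences

variable {ρ b : ℝ} {x y : ℕ → ℝ}

lemma pos_of_linear_recursion (hρ0 : 0 ≤ ρ) (hy : ∀ i, 0 < y i) (hx1 : x 1 = y 1)
    (hxrec : ∀ i, 2 ≤ i → x i = ρ * x (i - 1) + y i) {i : ℕ} (hi : 1 ≤ i) : 0 < x i := by
  induction i, hi using Nat.le_induction with
  | base => exact hx1 ▸ hy 1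
  | succ i hi ih =>
    rw [hxrec (i + 1) (by omega), Nat.add_sub_cancel]
    have := hy (i + 1)
    positivity

lemma le_linear_recursion (hρ0 : 0 ≤ ρ) (hy : ∀ i, 0 < y i) (hx1 : x 1 = y 1)
    (hxrec : ∀ i, 2 ≤ i → x i = ρ * x (i - 1) + y i) {i : ℕ} (hi : 1 ≤ i) : y i ≤ x i := by
  obtain rfl | hi2 := hi.eq_or_lt
  · exact hx1.ge
  · have := pos_of_linear_recursion hρ0 hy hx1 hxrec (Nat.le_sub_one_of_lt hi2)
    rw [hxrec i hi2]
    nlinarith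

lemma linear_recursion_le (hρ0 : 0 ≤ ρ) (hρ1 : ρ < 1) (hyb : ∀ i, y i ≤ b) (hx1 : x 1 = y 1)
    (hxrec : ∀ i, 2 ≤ i → x i = ρ * x (i - 1) + y i) {i : ℕ} (hi : 1 ≤ i) :
    x i ≤ b / (1 - ρ) * (1 - ρ ^ i) := by
  have hb : b / (1 - ρ) * (1 - ρ) = b := div_mul_cancel₀ b (by linarith)
  induction i, hi using Nat.le_induction with
  | base => rw [hx1, pow_one, hb]; exact hyb 1
  | succ i hi ih =>
    rw [hxrec (i + 1) (by omega), Nat.add_sub_cancel]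
    calc ρ * x i + y (i + 1) ≤ ρ * (b / (1 - ρ) * (1 - ρ ^ i)) + b :=
          add_le_add (mul_le_mul_of_nonneg_left ih hρ0) (hyb _)
      _ = b / (1 - ρ) * (1 - ρ ^ (i + 1)) := by linear_combination -hb

lemma linear_recursion_mem_Icc (hρ0 : 0 ≤ ρ) (hρ1 : ρ < 1) (hy : ∀ i, 0 < y i ∧ y i ≤ b)
    (hx1 : x 1 = y 1) (hxrec : ∀ i, 2 ≤ i → x i = ρ * x (i - 1) + y i) {i : ℕ} (hi : 1 ≤ i) :
    x i ∈ Set.Icc (y i) (b / (1 - ρ) * (1 - ρ ^ i)) :=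
  ⟨le_linear_recursion hρ0 (fun i ↦ (hy i).1) hx1 hxrec hi,
    linear_recursion_le hρ0 hρ1 (fun i ↦ (hy i).2) hx1 hxrec hi⟩

lemma sum_sq_le_of_le_mul_one_sub_pow {c : ℝ} (hρ0 : 0 ≤ ρ) (hρ1 : ρ ≤ 1) {m : ℕ}
    (hx : ∀ i ∈ Finset.Icc 1 m, 0 ≤ x i ∧ x i ≤ c * (1 - ρ ^ i)) :
    ∑ i ∈ Finset.Icc 1 m, x i ^ 2 ≤ c ^ 2 * (m - m * ρ ^ m) := by
  have hterm : ∀ i ∈ Finset.Icc 1 m, x i ^ 2 ≤ c ^ 2 * (1 - ρ ^ m) := by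
    intro i hi
    obtain ⟨hx0, hxc⟩ := hx i hi
    have hρi : ρ ^ m ≤ ρ ^ i := pow_le_pow_of_le_one hρ0 hρ1 (Finset.mem_Icc.mp hi).2
    have hρi1 : ρ ^ i ≤ 1 := pow_le_one₀ hρ0 hρ1
    calc x i ^ 2 ≤ c ^ 2 * (1 - ρ ^ i) ^ 2 := by rw [← mul_pow]; gcongr
      _ ≤ c ^ 2 * (1 - ρ ^ m) := by
        gcongr
        nlinarith [pow_nonneg hρ0 i]
  calc ∑ i ∈ Finset.Icc 1 m, x i ^ 2 ≤ (Finset.Icc 1 m).card • (c ^ 2 * (1 - ρ ^ m)) :=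
        Finset.sum_le_card_nsmul _ _ _ hterm
    _ = c ^ 2 * (m - m * ρ ^ m) := by rw [Nat.card_Icc, nsmul_eq_mul]; push_cast; ring

lemma sum_Icc_le_sum_Icc_of_le {k m : ℕ} (hkm : k ≤ m)
    (hyx : ∀ i, 1 ≤ i → 0 ≤ y i ∧ y i ≤ x i) :
    ∑ i ∈ Finset.Icc 1 k, y i ≤ ∑ i ∈ Finset.Icc 1 m, x i :=
  calc ∑ i ∈ Finset.Icc 1 k, y i ≤ ∑ i ∈ Finset.Icc 1 m, y i :=
        Finset.sum_le_sum_of_subset_of_nonneg (Finset.Icc_subset_Icc_right hkm)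
          fun i hi _ ↦ (hyx i (Finset.mem_Icc.mp hi).1).1
    _ ≤ ∑ i ∈ Finset.Icc 1 m, x i :=
        Finset.sum_le_sum fun i hi ↦ (hyx i (Finset.mem_Icc.mp hi).1).2
end Sequences

section Probability

variable {Ω : Type*} [MeasurableSpace Ω] {μ : Measure Ω}

lemma integrable_exp_mul_of_nonpos [IsFiniteMeasure μ] {X : Ω → ℝ} {t : ℝ} (ht : t ≤ 0)
    (hX : AEMeasurable X μ) (hX0 : 0 ≤ᵐ[μ] X) : Integrable (fun ω ↦ exp (t * X ω)) μ :=
  .of_mem_Icc 0 1 (measurable_exp.comp_aemeasurable (hX.const_mul t))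
    (hX0.mono fun _ h ↦ ⟨(exp_pos _).le, exp_le_one_iff.mpr (mul_nonpos_of_nonpos_of_nonneg ht h)⟩)

lemma mgf_lt_one_of_ae_pos [IsProbabilityMeasure μ] {X : Ω → ℝ} {t : ℝ} (ht : t < 0)
    (hX : AEMeasurable X μ) (hpos : ∀ᵐ ω ∂μ, 0 < X ω) : mgf X μ t < 1 := by
  have hlt : ∀ᵐ ω ∂μ, exp (t * X ω) < 1 := by
    filter_upwards [hpos] with ω hω
    exact exp_lt_one_iff.mpr (mul_neg_of_neg_of_pos ht hω)
  have hint : Integrable (fun ω ↦ exp (t * X ω)) μ :=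
    integrable_exp_mul_of_nonpos ht.le hX (hpos.mono fun ω h ↦ h.le)
  have hgap : 0 < ∫ ω, (1 - exp (t * X ω)) ∂μ := by
    refine (integral_pos_iff_support_of_nonneg_ae (hlt.mono fun _ h ↦ sub_nonneg.mpr h.le)
      ((integrable_const 1).sub hint)).mpr (pos_iff_ne_zero.mpr fun h ↦ ?_)
    obtain ⟨ω, hω0, hω⟩ := ((Measure.measure_support_eq_zero_iff μ).mp h).and hlt |>.exists
    simp only [Pi.zero_apply, sub_eq_zero] at hω0
    exact hω.ne hω0.symm
  rw [integral_sub (integrable_const 1) hint, integral_const, probReal_univ, one_smul] at hgap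
  rw [mgf]
  linarith

lemma measure_sum_le_le_exp_mul_mgf_pow [IsProbabilityMeasure μ] {ι : Type*} {Y : ι → Ω → ℝ}
    (hmeas : ∀ i, Measurable (Y i)) (hindep : iIndepFun Y μ) {j : ι}
    (hident : ∀ i, IdentDistrib (Y i) (Y j) μ μ) (hY0 : ∀ i, 0 ≤ᵐ[μ] Y i) {t : ℝ} (ht : t ≤ 0)
    (s : Finset ι) (ε : ℝ) :
    μ.real {ω | (∑ i ∈ s, Y i) ω ≤ ε} ≤ exp (-t * ε) * mgf (Y j) μ t ^ s.card := by
  have hint := hindep.integrable_exp_mul_sum hmeas (s := s) fun i _ ↦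
    integrable_exp_mul_of_nonpos ht (hmeas i).aemeasurable (hY0 i)
  refine (measure_le_le_exp_mul_mgf ε ht hint).trans_eq ?_
  rw [hindep.mgf_sum hmeas, Finset.prod_eq_pow_card fun i _ ↦
    mgf_congr_of_identDistrib (Y i) (Y j) (hident i) t]

lemma lintegral_natCast_eq_tsum_measure_lt {M : Ω → ℕ} (hM : Measurable M) :
    ∫⁻ ω, (M ω : ℝ≥0∞) ∂μ = ∑' m, μ {ω | m < M ω} := by
  have hM_tsum : ∀ ω, (M ω : ℝ≥0∞) = ∑' m, {ω | m < M ω}.indicator 1 ω := by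
    intro ω
    rw [tsum_eq_sum (s := Finset.range (M ω)) fun m hm ↦ by simpa using hm]
    rw [Finset.sum_congr rfl fun m hm ↦
      Set.indicator_of_mem (s := {ω | m < M ω}) (Finset.mem_range.mp hm) (1 : Ω → ℝ≥0∞)]
    simp
  have hmeas_lt : ∀ m, MeasurableSet {ω | m < M ω} := fun m ↦ hM (measurableSet_Ioi (a := m))
  simp_rw [hM_tsum]
  rw [lintegral_tsum fun m ↦ (measurable_one.indicator (hmeas_lt m)).aemeasurable]
  simp_rw [lintegral_indicator_one (hmeas_lt _)]

lemma integrable_natCast_of_measure_lt_le_geometric {M : Ω → ℕ} (hM : Measurable M)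
    {C r : ℝ≥0∞} (hC : C ≠ ∞) (hr : r < 1) (htail : ∀ m, μ {ω | m < M ω} ≤ C * r ^ m) :
    Integrable (fun ω ↦ (M ω : ℝ)) μ := by
  have hfin : ∫⁻ ω, (M ω : ℝ≥0∞) ∂μ ≠ ∞ := by
    rw [lintegral_natCast_eq_tsum_measure_lt hM]
    refine ne_top_of_le_ne_top ?_ (ENNReal.tsum_le_tsum htail)
    rw [ENNReal.tsum_mul_left, ENNReal.tsum_geometric]
    exact ENNReal.mul_ne_top hC (ENNReal.inv_ne_top.mpr (tsub_pos_of_lt hr).ne')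
  simpa using integrable_toReal_of_lintegral_ne_top (measurable_from_top.comp hM).aemeasurable hfin

lemma integrable_of_lt_imp_sum_Icc_le_one [IsProbabilityMeasure μ] {Y : ℕ → Ω → ℝ}
    (hmeas : ∀ i, Measurable (Y i)) (hindep : iIndepFun Y μ) {j : ℕ}
    (hident : ∀ i, IdentDistrib (Y i) (Y j) μ μ) (hpos : ∀ i, ∀ᵐ ω ∂μ, 0 < Y i ω)
    {M : Ω → ℕ} (hM : Measurable M)
    (hsum : ∀ᵐ ω ∂μ, ∀ m, m < M ω → ∑ i ∈ Finset.Icc 1 (m + 1), Y i ω ≤ 1) :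
    Integrable (fun ω ↦ (M ω : ℝ)) μ := by
  set q := mgf (Y j) μ (-1)
  have hq0 : 0 ≤ q := mgf_nonneg
  have hq1 : q < 1 := mgf_lt_one_of_ae_pos (by norm_num) (hmeas j).aemeasurable (hpos j)
  refine integrable_natCast_of_measure_lt_le_geometric hM ENNReal.ofReal_ne_top
    (ENNReal.ofReal_lt_one.mpr hq1) (C := ENNReal.ofReal (exp 1 * q)) fun m ↦ ?_
  set W := ∑ i ∈ Finset.Icc 1 (m + 1), Y i
  have hsub : {ω | m < M ω} ≤ᵐ[μ] {ω | W ω ≤ 1} := by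
    filter_upwards [hsum] with ω hω hm
    show W ω ≤ 1
    simpa [W, Finset.sum_apply] using hω m hm
  have hchernoff : μ.real {ω | W ω ≤ 1} ≤ exp 1 * q ^ (m + 1) := by
    refine (measure_sum_le_le_exp_mul_mgf_pow hmeas hindep hident
      (fun i ↦ (hpos i).mono fun _ h ↦ h.le) (t := -1) (by norm_num) _ 1).trans_eq ?_
    rw [Nat.card_Icc]
    norm_num [q]
  calc μ {ω | m < M ω} ≤ μ {ω | W ω ≤ 1} := measure_mono_ae hsub
    _ = ENNReal.ofReal (μ.real {ω | W ω ≤ 1}) := (ofReal_measureReal (measure_ne_top _ _)).symm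
    _ ≤ ENNReal.ofReal (exp 1 * q ^ (m + 1)) := ENNReal.ofReal_le_ofReal hchernoff
    _ = ENNReal.ofReal (exp 1 * q) * ENNReal.ofReal q ^ m := by
      rw [← ENNReal.ofReal_pow hq0, ← ENNReal.ofReal_mul (by positivity)]
      ring_nf

lemma MeasureTheory.Integrable.natCast_mul_pow {M : Ω → ℕ} (hM : Measurable M)
    (hint : Integrable (fun ω ↦ (M ω : ℝ)) μ) {ρ : ℝ} (hρ0 : 0 ≤ ρ) (hρ1 : ρ ≤ 1) :
    Integrable (fun ω ↦ (M ω : ℝ) * ρ ^ M ω) μ := by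
  refine hint.mono ((measurable_from_top (f := fun k : ℕ ↦ (k : ℝ) * ρ ^ k)).comp hM
    ).aestronglyMeasurable (ae_of_all _ fun ω ↦ ?_)
  simp only [norm_mul, norm_pow, Real.norm_natCast, Real.norm_of_nonneg hρ0]
  exact mul_le_of_le_one_right (Nat.cast_nonneg _) (pow_le_one₀ hρ0 hρ1)

end Probability

theorem stmt_8_general
    {Ω : Type*} [MeasurableSpace Ω] (μ : Measure Ω) [IsProbabilityMeasure μ]
    (ρ lam : ℝ) (n : ℕ)
    (hρ0 : 0 ≤ ρ) (hρ1 : ρ < 1)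
    (Y X S : ℕ → Ω → ℝ) (M : Ω → ℕ)
    (hYmeas : ∀ i, Measurable (Y i))
    (hYindep : iIndepFun Y μ)
    (hYident : ∀ i, IdentDistrib (Y i) (Y 1) μ μ)
    (hYbd : ∀ i, ∀ᵐ ω ∂μ, 0 < Y i ω ∧ Y i ω ≤ lam / n)
    (hX1 : ∀ ω, X 1 ω = Y 1 ω)
    (hXrec : ∀ i, 2 ≤ i → ∀ ω, X i ω = ρ * X (i - 1) ω + Y i ω)
    (hS : ∀ m ω, S m ω = ∑ i ∈ Finset.Icc 1 m, X i ω)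
    (hMmeas : Measurable M)
    (hM : ∀ᵐ ω ∂μ, S (M ω) ω ≤ 1 ∧ 1 < S (M ω + 1) ω) :
    ∫ ω, (∑ i ∈ Finset.Icc 1 (M ω), (X i ω) ^ 2) ∂μ ≤
      (lam / ((n : ℝ) * (1 - ρ))) ^ 2 *
        ((∫ ω, (M ω : ℝ) ∂μ) - ∫ ω, (M ω : ℝ) * ρ ^ (M ω) ∂μ) := by
  set c := lam / ((n : ℝ) * (1 - ρ)) with hc
  rw [div_mul_eq_div_div] at hc
  have hbounds : ∀ᵐ ω ∂μ, ∀ i, 1 ≤ i → 0 < Y i ω ∧ X i ω ∈ Set.Icc (Y i ω) (c * (1 - ρ ^ i)) := by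
    filter_upwards [ae_all_iff.mpr hYbd] with ω hY i hi
    exact ⟨(hY i).1, hc ▸ linear_recursion_mem_Icc hρ0 hρ1 hY (hX1 ω) (fun i hi ↦ hXrec i hi ω) hi⟩
  have hMint : Integrable (fun ω ↦ (M ω : ℝ)) μ := by
    refine integrable_of_lt_imp_sum_Icc_le_one hYmeas hYindep hYident
      (fun i ↦ (hYbd i).mono fun _ h ↦ h.1) hMmeas ?_
    filter_upwards [hbounds, hM] with ω hX hMω m hm
    calc _ ≤ S (M ω) ω := (hS _ ω) ▸ sum_Icc_le_sum_Icc_of_le hm fun i hi ↦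
          ⟨(hX i hi).1.le, (hX i hi).2.1⟩
      _ ≤ 1 := hMω.1
  have hMρint := hMint.natCast_mul_pow hMmeas hρ0 hρ1.le
  calc ∫ ω, (∑ i ∈ Finset.Icc 1 (M ω), (X i ω) ^ 2) ∂μ
      ≤ ∫ ω, c ^ 2 * ((M ω : ℝ) - M ω * ρ ^ M ω) ∂μ := by
        refine integral_mono_of_nonneg (ae_of_all _ fun ω ↦ by positivity)
          ((hMint.sub hMρint).const_mul _) ?_
        filter_upwards [hbounds] with ω hX
        exact sum_sq_le_of_le_mul_one_sub_pow hρ0 hρ1.le fun i hi ↦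
          have ⟨hY, hYX, hXc⟩ := hX i (Finset.mem_Icc.mp hi).1
          ⟨(hY.trans_le hYX).le, hXc⟩
    _ = c ^ 2 * ((∫ ω, (M ω : ℝ) ∂μ) - ∫ ω, (M ω : ℝ) * ρ ^ (M ω) ∂μ) := by
        rw [integral_const_mul, integral_sub hMint hMρint]

theorem stmt_8
    {Ω : Type*} [MeasurableSpace Ω] (μ : Measure Ω) [IsProbabilityMeasure μ]
    (ρ lam : ℝ) (n : ℕ)
    (hρ0 : 0 ≤ ρ) (hρ1 : ρ < 1) (hlam : 1 < lam) (hn : 0 < n)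
    (Y X S : ℕ → Ω → ℝ) (M : Ω → ℕ)
    (hYmeas : ∀ i, Measurable (Y i))
    (hYindep : iIndepFun Y μ)
    (hYident : ∀ i, IdentDistrib (Y i) (Y 1) μ μ)
    (hYbd : ∀ i, ∀ᵐ ω ∂μ, 0 < Y i ω ∧ Y i ω ≤ lam / n)
    (hYmean : ∀ i, ∫ ω, Y i ω ∂μ = 1 / n)
    (hX1 : ∀ ω, X 1 ω = Y 1 ω)
    (hXrec : ∀ i, 2 ≤ i → ∀ ω, X i ω = ρ * X (i - 1) ω + Y i ω)
    (hS : ∀ m ω, S m ω = ∑ i ∈ Finset.Icc 1 m, X i ω)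
    (hMmeas : Measurable M)
    (hM : ∀ᵐ ω ∂μ, S (M ω) ω ≤ 1 ∧ 1 < S (M ω + 1) ω) :
    ∫ ω, (∑ i ∈ Finset.Icc 1 (M ω), (X i ω) ^ 2) ∂μ ≤
      (lam / ((n : ℝ) * (1 - ρ))) ^ 2 *
        ((∫ ω, (M ω : ℝ) ∂μ) - ∫ ω, (M ω : ℝ) * ρ ^ (M ω) ∂μ) :=
  stmt_8_general μ ρ lam n hρ0 hρ1 Y X S M hYmeas hYindep hYident hYbd hX1 hXrec hS hMmeas hM
end

section
/- Assume additionally 0 < ρ < 1 and that the sampling density satisfies n > (λ/(1 − ρ))(1 − 2/ln ρ). Then M > −2/ln ρ almost surely and, by Jensen's inequality applied to the function x ↦ x ρ^x (which is convex on (−2/ln ρ, ∞)), E[M ρ^M] ≥ E[M] · ρ^{E[M]}. -/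
/-! Each gap satisfies `X i ≤ ρ X (i - 1) + λ / n`, so it is bounded by the fixed point
`λ / (n (1 - ρ))`; hence `1 < S (M + 1)` forces `M + 1 > n (1 - ρ) / λ > 1 - 2 / log ρ`.
On `[-2 / log ρ, ∞)` the second derivative `log ρ (2 + x log ρ) ρ ^ x` of `x ρ ^ x` is
nonnegative, so Jensen's inequality applies; `x ρ ^ x ≤ x` makes `M ρ ^ M` integrable. -/

open MeasureTheory ProbabilityTheory Real

lemma hasDerivAt_mul_exp_mul (c x : ℝ) :
    HasDerivAt (fun x => x * exp (c * x)) ((1 + c * x) * exp (c * x)) x :=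
  ((hasDerivAt_id' x).mul ((hasDerivAt_id' x).const_mul c).exp).congr_deriv (by ring)

lemma hasDerivAt_one_add_mul_mul_exp_mul (c x : ℝ) :
    HasDerivAt (fun x => (1 + c * x) * exp (c * x)) (c * (2 + c * x) * exp (c * x)) x := by
  have hlin : HasDerivAt (fun x => 1 + c * x) c x := by
    simpa using ((hasDerivAt_id' x).const_mul c).const_add 1
  exact (hlin.mul ((hasDerivAt_id' x).const_mul c).exp).congr_deriv (by ring)

lemma convexOn_mul_exp_mul (c : ℝ) :
    ConvexOn ℝ (Set.Ici (-2 / c)) fun x => x * exp (c * x) := by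
  refine convexOn_of_hasDerivWithinAt2_nonneg (convex_Ici _) (by fun_prop)
    (fun x _ => (hasDerivAt_mul_exp_mul c x).hasDerivWithinAt)
    (fun x _ => (hasDerivAt_one_add_mul_mul_exp_mul c x).hasDerivWithinAt) fun x hx => ?_
  rw [interior_Ici, Set.mem_Ioi] at hx
  have hc : 0 ≤ c * (2 + c * x) := by
    rcases eq_or_ne c 0 with rfl | hc
    · simp
    · have : c * (2 + c * x) = c ^ 2 * (x - -2 / c) := by field_simp; ring
      rw [this]
      exact mul_nonneg (sq_nonneg c) (by linarith)
  positivity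

lemma convexOn_mul_rpow {b : ℝ} (hb : 0 < b) :
    ConvexOn ℝ (Set.Ici (-2 / log b)) fun x => x * b ^ x := by
  simpa only [rpow_def_of_pos hb] using convexOn_mul_exp_mul (log b)

lemma mul_rpow_integral_le_integral_mul_rpow {Ω : Type*} [MeasurableSpace Ω] {μ : Measure Ω}
    [IsProbabilityMeasure μ] {b : ℝ} (hb0 : 0 < b) (hb1 : b < 1) {f : Ω → ℝ}
    (hf : ∀ᵐ ω ∂μ, -2 / log b ≤ f ω) :
    (∫ ω, f ω ∂μ) * b ^ (∫ ω, f ω ∂μ) ≤ ∫ ω, f ω * b ^ f ω ∂μ := by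
  have hf0 : ∀ᵐ ω ∂μ, 0 ≤ f ω := by
    have : 0 < -2 / log b := div_pos_of_neg_of_neg (by norm_num) (log_neg hb0 hb1)
    filter_upwards [hf] with ω hω using by linarith
  have hg : Continuous fun x => x * b ^ x := continuous_id.mul (continuous_const_rpow hb0.ne')
  by_cases hfi : Integrable f μ
  · have hgi : Integrable (fun ω => f ω * b ^ f ω) μ := by
      refine hfi.mono (hg.comp_aestronglyMeasurable hfi.aestronglyMeasurable) ?_
      filter_upwards [hf0] with ω hω
      rw [norm_mul, norm_of_nonneg (rpow_nonneg hb0.le _)]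
      exact mul_le_of_le_one_right (norm_nonneg _) (rpow_le_one hb0.le hb1.le hω)
    exact (convexOn_mul_rpow hb0).map_integral_le hg.continuousOn isClosed_Ici hf hfi hgi
  · rw [integral_undef hfi, zero_mul]
    refine integral_nonneg_of_ae ?_
    filter_upwards [hf0] with ω hω using mul_nonneg hω (rpow_nonneg hb0.le _)

lemma le_div_one_sub_of_le_mul_add {x : ℕ → ℝ} {ρ b : ℝ} (hρ0 : 0 ≤ ρ) (hρ1 : ρ < 1)
    (hb : 0 ≤ b) (h1 : x 1 ≤ b) (hrec : ∀ i, 1 ≤ i → x (i + 1) ≤ ρ * x i + b) :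
    ∀ i, 1 ≤ i → x i ≤ b / (1 - ρ) := by
  have h1ρ : 0 < 1 - ρ := sub_pos.2 hρ1
  have hfix : ρ * (b / (1 - ρ)) + b = b / (1 - ρ) := by field_simp; ring
  intro i hi
  induction i, hi using Nat.le_induction with
  | base => exact h1.trans (le_div_self hb h1ρ (by linarith))
  | succ i hi ih => linarith [hrec i hi, mul_le_mul_of_nonneg_left ih hρ0]

lemma one_lt_succ_mul_of_one_lt_sum {x : ℕ → ℝ} {B : ℝ} (hx : ∀ i, 1 ≤ i → x i ≤ B)
    {m : ℕ} (h : 1 < ∑ i ∈ Finset.Icc 1 (m + 1), x i) : 1 < (m + 1) * B := by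
  calc 1 < ∑ i ∈ Finset.Icc 1 (m + 1), x i := h
    _ ≤ ∑ _i ∈ Finset.Icc 1 (m + 1), B :=
      Finset.sum_le_sum fun i hi => hx i (Finset.mem_Icc.1 hi).1
    _ = (m + 1) * B := by simp

theorem stmt_10_general
    {Ω : Type*} [MeasurableSpace Ω] (μ : Measure Ω) [IsProbabilityMeasure μ]
    (ρ lam : ℝ) (n : ℕ)
    (hρ1 : ρ < 1) (hlam : 1 < lam) (hn : 0 < n)
    (Y X S : ℕ → Ω → ℝ) (M : Ω → ℕ)
    (hYbd : ∀ i, ∀ᵐ ω ∂μ, 0 < Y i ω ∧ Y i ω ≤ lam / n)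
    (hX1 : ∀ ω, X 1 ω = Y 1 ω)
    (hXrec : ∀ i, 2 ≤ i → ∀ ω, X i ω = ρ * X (i - 1) ω + Y i ω)
    (hS : ∀ m ω, S m ω = ∑ i ∈ Finset.Icc 1 m, X i ω)
    (hM : ∀ᵐ ω ∂μ, S (M ω) ω ≤ 1 ∧ 1 < S (M ω + 1) ω)
    (hρpos : 0 < ρ)
    (hngt : lam / (1 - ρ) * (1 - 2 / Real.log ρ) < (n : ℝ)) :
    (∀ᵐ ω ∂μ, -2 / Real.log ρ < (M ω : ℝ)) ∧
    (∫ ω, (M ω : ℝ) ∂μ) * ρ ^ (∫ ω, (M ω : ℝ) ∂μ) ≤ ∫ ω, (M ω : ℝ) * ρ ^ (M ω) ∂μ := by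
  have hK : 0 < lam / (1 - ρ) := div_pos (by linarith) (sub_pos.2 hρ1)
  have hMlow : ∀ᵐ ω ∂μ, -2 / Real.log ρ < (M ω : ℝ) := by
    filter_upwards [ae_all_iff.2 hYbd, hM] with ω hY hMω
    have hX : ∀ i, 1 ≤ i → X i ω ≤ lam / (1 - ρ) / n := by
      rw [div_right_comm]
      refine le_div_one_sub_of_le_mul_add hρpos.le hρ1 (by positivity)
        ((hX1 ω).trans_le (hY 1).2) fun i _ => ?_
      rw [hXrec (i + 1) (by omega), Nat.add_sub_cancel]
      linarith [(hY (i + 1)).2]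
    have hsucc := one_lt_succ_mul_of_one_lt_sum hX (hS (M ω + 1) ω ▸ hMω.2)
    rw [mul_div_assoc', one_lt_div (by positivity), mul_comm] at hsucc
    have hM1 : 1 - 2 / log ρ < M ω + 1 := lt_of_mul_lt_mul_left (hngt.trans hsucc) hK.le
    rw [neg_div]
    linarith
  refine ⟨hMlow, ?_⟩
  simpa only [rpow_natCast] using
    mul_rpow_integral_le_integral_mul_rpow hρpos hρ1 (hMlow.mono fun ω hω => hω.le)

theorem stmt_10
    {Ω : Type*} [MeasurableSpace Ω] (μ : Measure Ω) [IsProbabilityMeasure μ]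
    (ρ lam : ℝ) (n : ℕ)
    (hρ0 : 0 ≤ ρ) (hρ1 : ρ < 1) (hlam : 1 < lam) (hn : 0 < n)
    (Y X S : ℕ → Ω → ℝ) (M : Ω → ℕ)
    (hYmeas : ∀ i, Measurable (Y i))
    (hYindep : iIndepFun Y μ)
    (hYident : ∀ i, IdentDistrib (Y i) (Y 1) μ μ)
    (hYbd : ∀ i, ∀ᵐ ω ∂μ, 0 < Y i ω ∧ Y i ω ≤ lam / n)
    (hYmean : ∀ i, ∫ ω, Y i ω ∂μ = 1 / n)
    (hX1 : ∀ ω, X 1 ω = Y 1 ω)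
    (hXrec : ∀ i, 2 ≤ i → ∀ ω, X i ω = ρ * X (i - 1) ω + Y i ω)
    (hS : ∀ m ω, S m ω = ∑ i ∈ Finset.Icc 1 m, X i ω)
    (hMmeas : Measurable M)
    (hM : ∀ᵐ ω ∂μ, S (M ω) ω ≤ 1 ∧ 1 < S (M ω + 1) ω)
    (hρpos : 0 < ρ)
    (hngt : lam / (1 - ρ) * (1 - 2 / Real.log ρ) < (n : ℝ)) :
    (∀ᵐ ω ∂μ, -2 / Real.log ρ < (M ω : ℝ)) ∧
    (∫ ω, (M ω : ℝ) ∂μ) * ρ ^ (∫ ω, (M ω : ℝ) ∂μ) ≤ ∫ ω, (M ω : ℝ) * ρ ^ (M ω) ∂μ :=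
  stmt_10_general μ ρ lam n hρ1 hlam hn Y X S M hYbd hX1 hXrec hS hM hρpos hngt
end

section
/- Assume additionally 0 < ρ < 1 and that the sampling density satisfies n > (λ/(1 − ρ))(1 − 2/ln ρ). Then the expected sum of squared intersample distances satisfies E[Σ_{i=1}^{M} X_i²] ≤ (λ/(n(1 − ρ)))² · (n + (1 − ρ)/λ) · (1 − ρ^{n + 1/λ}). -/
/-!
The bound is deterministic. Since `0 ≤ ρ < 1` and `0 < Yᵢ ≤ λ/n`, the recursion
`Xᵢ = ρ Xᵢ₋₁ + Yᵢ` keeps every `Xᵢ` in `(0, c]` with `c = λ/(n(1 - ρ))`, the fixed point of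
`x ↦ ρ x + λ/n`. Hence `∑_{i ≤ M} Xᵢ² ≤ c · S_M ≤ c`, and `c` is at most the right-hand side
because `c (n + (1 - ρ)/λ) (1 - ρ^{n + 1/λ}) ≥ (λ/(1 - ρ) + 1/n)(1 - ρ) ≥ λ ≥ 1`.
-/

open MeasureTheory ProbabilityTheory Real

lemma pos_and_le_div_one_sub_of_rec {ρ b : ℝ} {x y : ℕ → ℝ} (hρ0 : 0 ≤ ρ) (hρ1 : ρ < 1)
    (hy : ∀ i, 0 < y i ∧ y i ≤ b) (hx1 : x 1 = y 1)
    (hxrec : ∀ i, 2 ≤ i → x i = ρ * x (i - 1) + y i) :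
    ∀ i, 1 ≤ i → 0 < x i ∧ x i ≤ b / (1 - ρ) := by
  have hρ1' : 0 < 1 - ρ := by linarith
  have hfix : ρ * (b / (1 - ρ)) + b = b / (1 - ρ) := by field_simp; ring
  have hb : 0 ≤ b := (hy 1).1.le.trans (hy 1).2
  intro i hi
  induction i, hi using Nat.le_induction with
  | base =>
    rw [hx1]
    exact ⟨(hy 1).1, (hy 1).2.trans (le_div_self hb hρ1' (by linarith))⟩
  | succ i hi ih =>
    rw [hxrec (i + 1) (by omega), Nat.add_sub_cancel]
    obtain ⟨hy_pos, hy_le⟩ := hy (i + 1)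
    constructor
    · positivity [ih.1]
    · nlinarith [mul_le_mul_of_nonneg_left ih.2 hρ0]

lemma sum_sq_le_mul_sum {ι : Type*} (s : Finset ι) {x : ι → ℝ} {c : ℝ}
    (hx : ∀ i ∈ s, 0 ≤ x i ∧ x i ≤ c) : ∑ i ∈ s, x i ^ 2 ≤ c * ∑ i ∈ s, x i := by
  rw [Finset.mul_sum]
  refine Finset.sum_le_sum fun i hi => ?_
  rw [sq]
  exact mul_le_mul_of_nonneg_right (hx i hi).2 (hx i hi).1

lemma div_le_sq_mul_mul_one_sub {ρ lam N q : ℝ} (hρ1 : ρ < 1) (hlam : 1 ≤ lam) (hN : 0 < N)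
    (hq : q ≤ ρ) :
    lam / (N * (1 - ρ)) ≤ (lam / (N * (1 - ρ))) ^ 2 * (N + (1 - ρ) / lam) * (1 - q) := by
  have hρ1' : 0 < 1 - ρ := by linarith
  set c := lam / (N * (1 - ρ))
  have hc : 0 < c := by positivity
  have hexpand : c * (N + (1 - ρ) / lam) * (1 - ρ) = lam + (1 - ρ) / N := by
    simp only [c]; field_simp
  have hone : 1 ≤ c * (N + (1 - ρ) / lam) * (1 - q) :=
    calc (1 : ℝ) ≤ lam + (1 - ρ) / N := by linarith [div_nonneg hρ1'.le hN.le]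
      _ = c * (N + (1 - ρ) / lam) * (1 - ρ) := hexpand.symm
      _ ≤ c * (N + (1 - ρ) / lam) * (1 - q) := by gcongr
  calc c = c * 1 := (mul_one c).symm
    _ ≤ c * (c * (N + (1 - ρ) / lam) * (1 - q)) := by gcongr
    _ = c ^ 2 * (N + (1 - ρ) / lam) * (1 - q) := by ring

theorem stmt_11_general
    {Ω : Type*} [MeasurableSpace Ω] (μ : Measure Ω) [IsProbabilityMeasure μ]
    (ρ lam : ℝ) (n : ℕ)
    (hρ0 : 0 ≤ ρ) (hρ1 : ρ < 1) (hlam : 1 < lam) (hn : 0 < n)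
    (Y X S : ℕ → Ω → ℝ) (M : Ω → ℕ)
    (hYbd : ∀ i, ∀ᵐ ω ∂μ, 0 < Y i ω ∧ Y i ω ≤ lam / n)
    (hX1 : ∀ ω, X 1 ω = Y 1 ω)
    (hXrec : ∀ i, 2 ≤ i → ∀ ω, X i ω = ρ * X (i - 1) ω + Y i ω)
    (hS : ∀ m ω, S m ω = ∑ i ∈ Finset.Icc 1 m, X i ω)
    (hM : ∀ᵐ ω ∂μ, S (M ω) ω ≤ 1 ∧ 1 < S (M ω + 1) ω) :
    ∫ ω, (∑ i ∈ Finset.Icc 1 (M ω), (X i ω) ^ 2) ∂μ ≤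
      (lam / ((n : ℝ) * (1 - ρ))) ^ 2 * ((n : ℝ) + (1 - ρ) / lam) *
        (1 - ρ ^ ((n : ℝ) + 1 / lam)) := by
  have hn1 : (1 : ℝ) ≤ n := by exact_mod_cast hn
  have hlam0 : 0 < lam := by linarith
  set c := lam / ((n : ℝ) * (1 - ρ))
  have hc : 0 < c := div_pos hlam0 (mul_pos (by linarith) (by linarith))
  have hbound : ∀ᵐ ω ∂μ, ∑ i ∈ Finset.Icc 1 (M ω), X i ω ^ 2 ≤ c := by
    filter_upwards [ae_all_iff.mpr hYbd, hM] with ω hY hMω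
    have hX := pos_and_le_div_one_sub_of_rec hρ0 hρ1 hY (hX1 ω) (fun i hi => hXrec i hi ω)
    rw [div_div] at hX
    calc ∑ i ∈ Finset.Icc 1 (M ω), X i ω ^ 2 ≤ c * S (M ω) ω := by
          rw [hS]
          exact sum_sq_le_mul_sum _ fun i hi =>
            ⟨(hX i (Finset.mem_Icc.mp hi).1).1.le, (hX i (Finset.mem_Icc.mp hi).1).2⟩
      _ ≤ c := mul_le_of_le_one_right hc.le hMω.1
  calc ∫ ω, ∑ i ∈ Finset.Icc 1 (M ω), X i ω ^ 2 ∂μ ≤ ∫ _, c ∂μ :=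
        integral_mono_of_nonneg (.of_forall fun ω => by positivity) (integrable_const c) hbound
    _ = c := by simp
    _ ≤ _ := div_le_sq_mul_mul_one_sub hρ1 hlam.le (by linarith)
          (rpow_le_self_of_le_one hρ0 hρ1.le (by linarith [one_div_pos.mpr hlam0]))

theorem stmt_11
    {Ω : Type*} [MeasurableSpace Ω] (μ : Measure Ω) [IsProbabilityMeasure μ]
    (ρ lam : ℝ) (n : ℕ)
    (hρ0 : 0 ≤ ρ) (hρ1 : ρ < 1) (hlam : 1 < lam) (hn : 0 < n)
    (Y X S : ℕ → Ω → ℝ) (M : Ω → ℕ)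
    (hYmeas : ∀ i, Measurable (Y i))
    (hYindep : iIndepFun Y μ)
    (hYident : ∀ i, IdentDistrib (Y i) (Y 1) μ μ)
    (hYbd : ∀ i, ∀ᵐ ω ∂μ, 0 < Y i ω ∧ Y i ω ≤ lam / n)
    (hYmean : ∀ i, ∫ ω, Y i ω ∂μ = 1 / n)
    (hX1 : ∀ ω, X 1 ω = Y 1 ω)
    (hXrec : ∀ i, 2 ≤ i → ∀ ω, X i ω = ρ * X (i - 1) ω + Y i ω)
    (hS : ∀ m ω, S m ω = ∑ i ∈ Finset.Icc 1 m, X i ω)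
    (hMmeas : Measurable M)
    (hM : ∀ᵐ ω ∂μ, S (M ω) ω ≤ 1 ∧ 1 < S (M ω + 1) ω)
    (hρpos : 0 < ρ)
    (hngt : lam / (1 - ρ) * (1 - 2 / Real.log ρ) < (n : ℝ)) :
    ∫ ω, (∑ i ∈ Finset.Icc 1 (M ω), (X i ω) ^ 2) ∂μ ≤
      (lam / ((n : ℝ) * (1 - ρ))) ^ 2 * ((n : ℝ) + (1 - ρ) / lam) *
        (1 - ρ ^ ((n : ℝ) + 1 / lam)) :=
  stmt_11_general μ ρ lam n hρ0 hρ1 hlam hn Y X S M hYbd hX1 hXrec hS hM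
end

section
/- For every positive integer m and every integer k with |k| ≤ b, the m-point Riemann-sum approximation A_R[k] = (1/m) Σ_{i=1}^{m} g(i/m) e^{−j2πki/m} of the Fourier coefficient a[k] = ∫₀¹ g(x) e^{−j2πkx} dx satisfies |A_R[k] − a[k]|² ≤ 16 b² π² / m². -/
/-!
Aliasing: averaging `e^{2πi(l-k)x}` over the grid `x = i/m` gives `1` when `m ∣ l - k` and `0`
otherwise, so the Riemann sum equals `∑ a[l]` over the `l ∈ [-b, b]` with `l ≡ k (mod m)`. The
error is therefore the sum over the aliases `l ≠ k`, of which there are at most `4b/m`, and each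
`|a[l]| ≤ sup |g| ≤ 1` because `a[l]` is also the `l`-th Fourier integral of `g`. Hence
`|A_R[k] - a[k]| ≤ 4b/m ≤ 4πb/m`.
-/

open MeasureTheory ProbabilityTheory Real

theorem sum_Icc_pow_eq_zero_of_pow_eq_one {K : Type*} [DivisionRing K] {z : K} {m : ℕ}
    (hz : z ^ m = 1) (h : z ≠ 1) : ∑ i ∈ Finset.Icc 1 m, z ^ i = 0 := by
  rw [← Finset.Ico_add_one_right_eq_Icc, geom_sum_Ico h (by omega), pow_succ, hz, one_mul,
    pow_one, sub_self, zero_div]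

theorem integral_exp_two_pi_I_int_mul (n : ℤ) :
    ∫ x in (0 : ℝ)..1, Complex.exp (2 * π * Complex.I * n * x) = if n = 0 then 1 else 0 := by
  split_ifs with hn
  · simp [hn]
  · have hc : 2 * π * Complex.I * n ≠ 0 := by simp [Real.pi_ne_zero, hn]
    rw [integral_exp_mul_complex hc, Complex.ofReal_one, Complex.ofReal_zero, mul_one, mul_zero,
      Complex.exp_zero, show 2 * π * Complex.I * n = n * (2 * π * Complex.I) by ring,
      Complex.exp_int_mul_two_pi_mul_I, sub_self, zero_div]

theorem sum_Icc_exp_two_pi_I_int_mul_div {m : ℕ} (hm : m ≠ 0) (n : ℤ) :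
    ∑ i ∈ Finset.Icc 1 m, Complex.exp (2 * π * Complex.I * n * i / m) =
      if (m : ℤ) ∣ n then (m : ℂ) else 0 := by
  have hζ := Complex.isPrimitiveRoot_exp m hm
  have hterm : ∀ i : ℕ, Complex.exp (2 * π * Complex.I * n * i / m) =
      (Complex.exp (2 * π * Complex.I / m) ^ n) ^ i := by
    intro i
    rw [← Complex.exp_int_mul, ← Complex.exp_nat_mul]
    ring_nf
  have hpow : (Complex.exp (2 * π * Complex.I / m) ^ n) ^ m = 1 := by
    rw [← zpow_natCast, ← zpow_mul, mul_comm n, zpow_mul, zpow_natCast, hζ.pow_eq_one, one_zpow]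
  simp only [hterm]
  split_ifs with hdvd
  · simp [(hζ.zpow_eq_one_iff_dvd n).2 hdvd]
  · exact sum_Icc_pow_eq_zero_of_pow_eq_one hpow (mt (hζ.zpow_eq_one_iff_dvd n).1 hdvd)

theorem integral_mul_exp_neg_of_eq_sum {s : Finset ℤ} {a : ℤ → ℂ} {g : ℝ → ℂ}
    (hg : ∀ x : ℝ, g x = ∑ l ∈ s, a l * Complex.exp (2 * π * Complex.I * l * x))
    {k : ℤ} (hk : k ∈ s) :
    ∫ x in (0 : ℝ)..1, g x * Complex.exp (-(2 * π * Complex.I * k * x)) = a k := by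
  have hprod : ∀ x : ℝ, g x * Complex.exp (-(2 * π * Complex.I * k * x)) =
      ∑ l ∈ s, a l * Complex.exp (2 * π * Complex.I * (l - k : ℤ) * x) := by
    intro x
    rw [hg, Finset.sum_mul]
    refine Finset.sum_congr rfl fun l _ => ?_
    rw [mul_assoc, ← Complex.exp_add]
    push_cast
    ring_nf
  simp_rw [hprod]
  rw [intervalIntegral.integral_finsetSum fun l _ =>
    (by fun_prop : Continuous _).intervalIntegrable _ _]
  simp only [intervalIntegral.integral_const_mul, integral_exp_two_pi_I_int_mul, sub_eq_zero,
    mul_ite, mul_one, mul_zero, Finset.sum_ite_eq', if_pos hk]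

theorem norm_coeff_le_of_norm_le {s : Finset ℤ} {a : ℤ → ℂ} {g : ℝ → ℂ}
    (hg : ∀ x : ℝ, g x = ∑ l ∈ s, a l * Complex.exp (2 * π * Complex.I * l * x)) {C : ℝ}
    (hgC : ∀ x, ‖g x‖ ≤ C) {k : ℤ} (hk : k ∈ s) : ‖a k‖ ≤ C := by
  rw [← integral_mul_exp_neg_of_eq_sum hg hk]
  have hunit : ∀ x : ℝ, ‖Complex.exp (-(2 * π * Complex.I * k * x))‖ = 1 := fun x => by
    rw [show -(2 * π * Complex.I * k * x) = ((-(2 * π * k * x) : ℝ) : ℂ) * Complex.I by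
      push_cast; ring]
    exact Complex.norm_exp_ofReal_mul_I _
  simpa using intervalIntegral.norm_integral_le_of_norm_le_const (a := 0) (b := 1)
    fun x _ => by rw [norm_mul, hunit, mul_one]; exact hgC x

theorem riemannSum_mul_exp_neg_eq_sum_filter_dvd {s : Finset ℤ} {a : ℤ → ℂ} {g : ℝ → ℂ}
    (hg : ∀ x : ℝ, g x = ∑ l ∈ s, a l * Complex.exp (2 * π * Complex.I * l * x))
    {m : ℕ} (hm : m ≠ 0) (k : ℤ) :
    (1 / (m : ℂ)) * ∑ i ∈ Finset.Icc 1 m,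
        g ((i : ℝ) / m) * Complex.exp (-(2 * π * Complex.I * k * i / m)) =
      ∑ l ∈ s with (m : ℤ) ∣ l - k, a l := by
  have hterm : ∀ i : ℕ, g ((i : ℝ) / m) * Complex.exp (-(2 * π * Complex.I * k * i / m)) =
      ∑ l ∈ s, a l * Complex.exp (2 * π * Complex.I * (l - k : ℤ) * i / m) := by
    intro i
    rw [hg, Finset.sum_mul]
    refine Finset.sum_congr rfl fun l _ => ?_
    rw [mul_assoc, ← Complex.exp_add]
    push_cast
    ring_nf
  simp_rw [hterm]
  rw [Finset.sum_comm, Finset.mul_sum, Finset.sum_filter]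
  refine Finset.sum_congr rfl fun l _ => ?_
  rw [← Finset.mul_sum, sum_Icc_exp_two_pi_I_int_mul_div hm]
  split_ifs
  · field_simp
  · simp

theorem card_erase_filter_dvd_sub_mul_le {s : Finset ℤ} {k : ℤ} {L : ℕ}
    (hs : ∀ l ∈ s, |l - k| ≤ L) {m : ℕ} (hm : m ≠ 0) :
    ((s.filter fun l => (m : ℤ) ∣ l - k).erase k).card * m ≤ 2 * L := by
  have hmZ : (0 : ℤ) < m := by omega
  set c : ℕ := L / m
  have hmaps : ∀ l ∈ (s.filter fun l => (m : ℤ) ∣ l - k).erase k,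
      (l - k) / m ∈ (Finset.Icc (-(c : ℤ)) c).erase 0 := by
    intro l hl
    obtain ⟨hlk, hls, t, ht⟩ := by simpa only [Finset.mem_erase, Finset.mem_filter] using hl
    have hbound := hs l hls
    rw [ht, Int.mul_ediv_cancel_left _ hmZ.ne', Finset.mem_erase, Finset.mem_Icc]
    have hct : |t| ≤ c := by
      rw [show (c : ℤ) = (L : ℤ) / m by omega, Int.le_ediv_iff_mul_le hmZ, mul_comm,
        ← abs_of_pos hmZ, ← abs_mul, ← ht]
      exact hbound
    refine ⟨?_, abs_le.1 hct⟩
    rintro rfl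
    omega
  have hinj : Set.InjOn (fun l => (l - k) / m) ((s.filter fun l => (m : ℤ) ∣ l - k).erase k) := by
    intro l hl l' hl' heq
    rw [Finset.mem_coe, Finset.mem_erase, Finset.mem_filter] at hl hl'
    have e := Int.ediv_mul_cancel hl.2.2
    have e' := Int.ediv_mul_cancel hl'.2.2
    simp only at heq
    rw [heq] at e
    omega
  have hcard := Finset.card_le_card_of_injOn _ hmaps hinj
  have hc : ((Finset.Icc (-(c : ℤ)) c).erase 0).card = 2 * c := by
    rw [Finset.card_erase_of_mem (by simp), Int.card_Icc]
    omega
  calc _ ≤ 2 * c * m := Nat.mul_le_mul_right m (hc ▸ hcard)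
    _ ≤ 2 * L := by rw [mul_assoc]; exact Nat.mul_le_mul_left 2 (Nat.div_mul_le_self L m)

theorem stmt_15_general (b : ℕ) (a : ℤ → ℂ) (g : ℝ → ℂ)
    (hg : ∀ x : ℝ, g x = ∑ k ∈ Finset.Icc (-(b : ℤ)) (b : ℤ),
        a k * Complex.exp (2 * (Real.pi : ℂ) * Complex.I * (k : ℂ) * (x : ℂ)))
    (hgbd : ∀ x : ℝ, ‖g x‖ ≤ 1)
    (m : ℕ) (hm : 0 < m) (k : ℤ) (hk : |k| ≤ (b : ℤ)) :
    ‖((1 / (m : ℂ)) * (∑ i ∈ Finset.Icc 1 m,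
          g ((i : ℝ) / (m : ℝ)) *
            Complex.exp (-(2 * (Real.pi : ℂ) * Complex.I * (k : ℂ) * (i : ℂ) / (m : ℂ))))
        - a k)‖ ^ 2
      ≤ 16 * b ^ 2 * Real.pi ^ 2 / m ^ 2 := by
  set aliases := ((Finset.Icc (-(b : ℤ)) b).filter fun l => (m : ℤ) ∣ l - k).erase k
  have hkb := abs_le.1 hk
  have hk_mem : k ∈ (Finset.Icc (-(b : ℤ)) b).filter fun l => (m : ℤ) ∣ l - k := by
    simp only [Finset.mem_filter, Finset.mem_Icc, sub_self, dvd_zero, and_true]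
    exact hkb
  have herror : (1 / (m : ℂ)) * (∑ i ∈ Finset.Icc 1 m, g ((i : ℝ) / m) *
      Complex.exp (-(2 * π * Complex.I * k * i / m))) - a k = ∑ l ∈ aliases, a l := by
    rw [riemannSum_mul_exp_neg_eq_sum_filter_dvd hg hm.ne', ← Finset.add_sum_erase _ _ hk_mem,
      add_sub_cancel_left]
  have hnorm : ‖∑ l ∈ aliases, a l‖ ≤ aliases.card := by
    simpa using norm_sum_le_of_le aliases fun l hl =>
      norm_coeff_le_of_norm_le hg hgbd (Finset.mem_of_mem_filter l (Finset.mem_of_mem_erase hl))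
  have hcard : aliases.card * m ≤ 2 * (2 * b) :=
    card_erase_filter_dvd_sub_mul_le (fun l hl => by
      have hlb := Finset.mem_Icc.1 hl
      rw [abs_le]
      push_cast
      omega) hm.ne'
  have hscaled : ‖∑ l ∈ aliases, a l‖ * m ≤ 4 * b := by
    calc ‖∑ l ∈ aliases, a l‖ * m ≤ aliases.card * m := by gcongr
      _ ≤ 4 * b := by exact_mod_cast (by omega : aliases.card * m ≤ 4 * b)
  rw [herror, le_div_iff₀ (by positivity), ← mul_pow]
  calc _ ≤ (4 * b : ℝ) ^ 2 := by gcongr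
    _ = 16 * b ^ 2 * 1 := by ring
    _ ≤ 16 * b ^ 2 * π ^ 2 := by gcongr; exact one_le_pow₀ (by linarith [Real.pi_gt_three])

theorem stmt_15 (b : ℕ) (hb : 0 < b) (a : ℤ → ℂ) (g : ℝ → ℂ)
    (hg : ∀ x : ℝ, g x = ∑ k ∈ Finset.Icc (-(b : ℤ)) (b : ℤ),
        a k * Complex.exp (2 * (Real.pi : ℂ) * Complex.I * (k : ℂ) * (x : ℂ)))
    (hgbd : ∀ x : ℝ, ‖g x‖ ≤ 1)
    (m : ℕ) (hm : 0 < m) (k : ℤ) (hk : |k| ≤ (b : ℤ))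
    (hak : a k = ∫ x in (0 : ℝ)..1,
        g x * Complex.exp (-(2 * (Real.pi : ℂ) * Complex.I * (k : ℂ) * (x : ℂ)))) :
    ‖((1 / (m : ℂ)) * (∑ i ∈ Finset.Icc 1 m,
          g ((i : ℝ) / (m : ℝ)) *
            Complex.exp (-(2 * (Real.pi : ℂ) * Complex.I * (k : ℂ) * (i : ℂ) / (m : ℂ))))
        - a k)‖ ^ 2
      ≤ 16 * b ^ 2 * Real.pi ^ 2 / m ^ 2 :=
  stmt_15_general b a g hg hgbd m hm k hk
end

section
/- Let W_1, W_2, … be i.i.d. real random variables with zero mean and finite variance σ², defined on the same probability space as and independent of the sequence (Y_i) (hence independent of M). For any integer k, the noise component of the estimate, Ŵ[k] = (1/M) Σ_{i=1}^{M} W_i e^{−j2πki/M}, satisfies E[|Ŵ[k]|²] ≤ σ² E[1/M]; consequently, if n(1 − ρ) > λ, then E[|Ŵ[k]|²] ≤ σ² λ/(n(1 − ρ) − λ). -/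
/-!
The sampling locations are functions of the `Y i` and increase strictly, because every `X i` is
positive; hence `{M = m}` coincides up to a null set with `{S m ≤ 1 < S (m + 1)}`, and `M` is
independent of the noise. Conditionally on `M = m` the estimate is the average of `m` independent
centred samples with unimodular weights, whose energy is `σ² / m`; summing over `m` gives
`σ² E[1 / M]`. For the second bound, the recursion gives `X i ≤ λ / (n (1 - ρ))`, so
`1 < S (M + 1) ≤ (M + 1) λ / (n (1 - ρ))`, which bounds `1 / M` pointwise.
-/

open MeasureTheory ProbabilityTheory Real

section Recursion

variable {ρ : ℝ} {x y : ℕ → ℝ}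

lemma pos_of_ar_recursion (hρ : 0 ≤ ρ) (hx1 : x 1 = y 1)
    (hrec : ∀ i, 2 ≤ i → x i = ρ * x (i - 1) + y i) (hy : ∀ i, 0 < y i) :
    ∀ i, 1 ≤ i → 0 < x i := by
  intro i hi
  induction i, hi using Nat.le_induction with
  | base => exact hx1 ▸ hy 1
  | succ i hi ih =>
    rw [hrec (i + 1) (by omega), Nat.add_sub_cancel]
    exact add_pos_of_nonneg_of_pos (mul_nonneg hρ ih.le) (hy _)

lemma le_div_one_sub_of_ar_recursion (hρ0 : 0 ≤ ρ) (hρ1 : ρ < 1) {b : ℝ} (hb : 0 ≤ b)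
    (hx1 : x 1 = y 1) (hrec : ∀ i, 2 ≤ i → x i = ρ * x (i - 1) + y i) (hy : ∀ i, y i ≤ b) :
    ∀ i, 1 ≤ i → x i ≤ b / (1 - ρ) := by
  have hρ : 0 < 1 - ρ := sub_pos.mpr hρ1
  intro i hi
  induction i, hi using Nat.le_induction with
  | base => exact hx1 ▸ (hy 1).trans (le_div_self hb hρ (by linarith))
  | succ i hi ih =>
    rw [hrec (i + 1) (by omega), Nat.add_sub_cancel]
    calc ρ * x i + y (i + 1) ≤ ρ * (b / (1 - ρ)) + b := by gcongr; exact hy _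
      _ = b / (1 - ρ) := by field_simp; ring

lemma strictMono_sum_Icc_of_pos (hx : ∀ i, 1 ≤ i → 0 < x i) :
    StrictMono fun m => ∑ i ∈ Finset.Icc 1 m, x i :=
  strictMono_nat_of_lt_succ fun m => by
    rw [Finset.sum_Icc_succ_top (by omega)]
    linarith [hx (m + 1) (by omega)]

lemma one_div_le_of_one_lt_sum_Icc {c : ℝ} (hc : c < 1) (hx : ∀ i, 1 ≤ i → x i ≤ c) {m : ℕ}
    (hm : 1 < ∑ i ∈ Finset.Icc 1 (m + 1), x i) : 1 / (m : ℝ) ≤ c / (1 - c) := by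
  have hsum : ∑ i ∈ Finset.Icc 1 (m + 1), x i ≤ (m + 1) * c := by
    calc ∑ i ∈ Finset.Icc 1 (m + 1), x i ≤ ∑ _i ∈ Finset.Icc 1 (m + 1), c :=
          Finset.sum_le_sum fun i hi => hx i (Finset.mem_Icc.mp hi).1
      _ = (m + 1) * c := by simp
  have hmc : 1 - c < m * c := by linarith
  have hc0 : 0 < c := by nlinarith [(Nat.cast_nonneg m : (0 : ℝ) ≤ m)]
  have hm0 : (0 : ℝ) < m := by nlinarith
  rw [div_le_div_iff₀ hm0 (by linarith)]
  linarith

end Recursion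

lemma measurable_of_ar_recursion {Ω : Type*} {m : MeasurableSpace Ω} {ρ : ℝ}
    {X Y : ℕ → Ω → ℝ} (hY : ∀ i, Measurable (Y i)) (hX1 : ∀ ω, X 1 ω = Y 1 ω)
    (hrec : ∀ i, 2 ≤ i → ∀ ω, X i ω = ρ * X (i - 1) ω + Y i ω) :
    ∀ i, 1 ≤ i → Measurable (X i) := by
  intro i hi
  induction i, hi using Nat.le_induction with
  | base => exact (funext hX1) ▸ hY 1
  | succ i hi ih =>
    rw [show X (i + 1) = fun ω => ρ * X i ω + Y (i + 1) ω from funext (hrec (i + 1) (by omega))]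
    exact (ih.const_mul ρ).add (hY _)

lemma StrictMono.eq_of_le_of_lt_succ {α : Type*} [LinearOrder α] {s : ℕ → α}
    (hs : StrictMono s) {a : α} {M m : ℕ} (hM : s M ≤ a ∧ a < s (M + 1))
    (hm : s m ≤ a ∧ a < s (m + 1)) : M = m := by
  by_contra hne
  rcases Nat.lt_or_gt_of_ne hne with h | h
  · exact absurd (hm.1.trans_lt hM.2) (not_lt.mpr (hs.monotone h))
  · exact absurd (hM.1.trans_lt hm.2) (not_lt.mpr (hs.monotone h))

section Independence

lemma measurable_iSup_comap {Ω ι β : Type*} [MeasurableSpace β] (f : ι → Ω → β) (i : ι) :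
    Measurable[⨆ j, MeasurableSpace.comap (f j) inferInstance] (f i) :=
  (comap_measurable (f i)).mono (le_iSup (fun j => MeasurableSpace.comap (f j) inferInstance) i)
    le_rfl

-- `m₀` is declared last, so it is the instance behind unannotated measurability statements.
variable {Ω : Type*} {m₁ m₀ : MeasurableSpace Ω} {μ : Measure Ω}

lemma ProbabilityTheory.Indep.of_forall_ae_eq {m₂ m₃ : MeasurableSpace Ω} (h : Indep m₁ m₂ μ)
    (h₃ : ∀ s, MeasurableSet[m₃] s → ∃ t, MeasurableSet[m₂] t ∧ s =ᵐ[μ] t) :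
    Indep m₁ m₃ μ := by
  rw [Indep_iff] at h ⊢
  intro t₁ s ht₁ hs
  obtain ⟨t, ht, hst⟩ := h₃ s hs
  rw [measure_congr hst, measure_congr ((ae_eq_refl t₁).inter hst), h t₁ t ht₁ ht]

lemma ProbabilityTheory.Indep.comap_of_ae_eq_preimage {m₂ : MeasurableSpace Ω}
    (h : Indep m₁ m₂ μ) {M : Ω → ℕ} {A : ℕ → Set Ω} (hA : ∀ k, MeasurableSet[m₂] (A k))
    (hMA : ∀ᵐ ω ∂μ, ∀ k, M ω = k ↔ ω ∈ A k) : Indep m₁ (MeasurableSpace.comap M ⊤) μ := by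
  refine h.of_forall_ae_eq ?_
  rintro _ ⟨T, -, rfl⟩
  refine ⟨⋃ k ∈ T, A k, MeasurableSet.biUnion T.to_countable fun k _ => hA k, ?_⟩
  filter_upwards [hMA] with ω hω
  change (M ω ∈ T) = (ω ∈ ⋃ k ∈ T, A k)
  simp [← hω]

lemma hasSum_integral_of_indep (hm₁ : m₁ ≤ m₀)
    {M : Ω → ℕ} (hM : Measurable M) (hind : Indep m₁ (MeasurableSpace.comap M ⊤) μ)
    {g : ℕ → Ω → ℝ} (hg : ∀ k, Measurable[m₁] (g k))
    (hint : Integrable (fun ω => g (M ω) ω) μ) :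
    HasSum (fun k => μ.real (M ⁻¹' {k}) * ∫ ω, g k ω ∂μ) (∫ ω, g (M ω) ω ∂μ) := by
  have hB : ∀ k, MeasurableSet (M ⁻¹' {k}) := fun k => hM (measurableSet_singleton k)
  have hunion : ⋃ k, M ⁻¹' {k} = Set.univ := by ext; simp
  have hsum := hasSum_integral_iUnion (f := fun ω => g (M ω) ω) (μ := μ) hB
    (fun k l hkl => Set.disjoint_left.mpr fun ω hk hl =>
      hkl ((show M ω = k from hk).symm.trans hl))
    (by rw [hunion]; exact hint.integrableOn)
  rw [hunion, setIntegral_univ] at hsum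
  suffices h : ∀ k, μ.real (M ⁻¹' {k}) * ∫ ω, g k ω ∂μ = ∫ ω in M ⁻¹' {k}, g (M ω) ω ∂μ by
    simpa only [h] using hsum
  intro k
  have hgk : IndepFun (g k) ((M ⁻¹' {k}).indicator (1 : Ω → ℝ)) μ := by
    rw [IndepFun_iff_Indep]
    refine indep_of_indep_of_le_left (indep_of_indep_of_le_right hind ?_) (hg k).comap_le
    have : Measurable[MeasurableSpace.comap M ⊤] ((M ⁻¹' {k}).indicator (1 : Ω → ℝ)) :=
      measurable_const.indicator ⟨{k}, trivial, rfl⟩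
    exact this.comap_le
  calc μ.real (M ⁻¹' {k}) * ∫ ω, g k ω ∂μ
      = ∫ ω, g k ω * (M ⁻¹' {k}).indicator (1 : Ω → ℝ) ω ∂μ := by
        rw [hgk.integral_fun_mul_eq_mul_integral ((hg k).mono hm₁ le_rfl).aestronglyMeasurable
          ((measurable_one.indicator (hB k)).aestronglyMeasurable), integral_indicator_one (hB k),
          mul_comm]
    _ = ∫ ω in M ⁻¹' {k}, g (M ω) ω ∂μ := by
        rw [← integral_indicator (hB k)]
        congr 1 with ω
        by_cases hω : M ω = k <;> simp [Set.indicator, hω]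

end Independence

section Noise

variable {Ω ι : Type*} {m₀ : MeasurableSpace Ω} {μ : Measure Ω} [IsFiniteMeasure μ]
  {W : ι → Ω → ℝ} {σ : ℝ}

lemma integral_sq_sum_mul_of_pairwise_indep (hW : ∀ i, MemLp (W i) 2 μ)
    (hindep : Pairwise fun i j => W i ⟂ᵢ[μ] W j) (hmean : ∀ i, μ[W i] = 0)
    (hvar : ∀ i, ∫ ω, W i ω ^ 2 ∂μ = σ ^ 2) (s : Finset ι) (b : ι → ℝ) :
    ∫ ω, (∑ i ∈ s, W i ω * b i) ^ 2 ∂μ = σ ^ 2 * ∑ i ∈ s, b i ^ 2 := by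
  set X : ι → Ω → ℝ := fun i ω => W i ω * b i
  have hX : ∀ i, MemLp (X i) 2 μ := fun i => (hW i).mul_const (b i)
  have hXvar : ∀ i, Var[X i; μ] = σ ^ 2 * b i ^ 2 := fun i => by
    rw [variance_mul_const, variance_of_integral_eq_zero (hW i).aemeasurable (hmean i), hvar]
  have hsum_mean : μ[∑ i ∈ s, X i] = 0 := by
    simp only [Finset.sum_apply]
    rw [integral_finsetSum s fun i _ => (hX i).integrable one_le_two]
    simp [X, integral_mul_const, hmean]
  calc ∫ ω, (∑ i ∈ s, W i ω * b i) ^ 2 ∂μ = Var[∑ i ∈ s, X i; μ] := by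
        rw [variance_of_integral_eq_zero (memLp_finsetSum' s fun i _ => hX i).aemeasurable
          hsum_mean]
        simp [X, Finset.sum_apply]
    _ = ∑ i ∈ s, Var[X i; μ] := IndepFun.variance_sum (fun i _ => hX i)
        fun i _ j _ hij => (hindep hij).comp (measurable_id.mul_const _) (measurable_id.mul_const _)
    _ = σ ^ 2 * ∑ i ∈ s, b i ^ 2 := by simp [hXvar, Finset.mul_sum]

lemma integral_norm_sq_sum_mul_of_pairwise_indep (hW : ∀ i, MemLp (W i) 2 μ)
    (hindep : Pairwise fun i j => W i ⟂ᵢ[μ] W j) (hmean : ∀ i, μ[W i] = 0)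
    (hvar : ∀ i, ∫ ω, W i ω ^ 2 ∂μ = σ ^ 2) (s : Finset ι) (a : ι → ℂ) :
    ∫ ω, ‖∑ i ∈ s, (W i ω : ℂ) * a i‖ ^ 2 ∂μ = σ ^ 2 * ∑ i ∈ s, ‖a i‖ ^ 2 := by
  have hsplit : ∀ ω, ‖∑ i ∈ s, (W i ω : ℂ) * a i‖ ^ 2
      = (∑ i ∈ s, W i ω * (a i).re) ^ 2 + (∑ i ∈ s, W i ω * (a i).im) ^ 2 := fun ω => by
    rw [Complex.sq_norm, Complex.normSq_apply]
    simp [Complex.re_sum, Complex.im_sum, sq]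
  have hint : ∀ b : ι → ℝ, Integrable (fun ω => (∑ i ∈ s, W i ω * b i) ^ 2) μ := fun b =>
    (memLp_finsetSum' s fun i _ => (hW i).mul_const (b i)).integrable_sq.congr
      (ae_of_all _ fun ω => by simp [Finset.sum_apply])
  simp_rw [hsplit]
  rw [integral_add (hint _) (hint _), integral_sq_sum_mul_of_pairwise_indep hW hindep hmean hvar,
    integral_sq_sum_mul_of_pairwise_indep hW hindep hmean hvar, ← mul_add, ← Finset.sum_add_distrib]
  simp only [Complex.sq_norm, Complex.normSq_apply, ← sq]

lemma ProbabilityTheory.IndepFun.memLp_two_of_memLp_two_add {E : Type*} [NormedAddCommGroup E]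
    [SecondCountableTopology E] [MeasurableSpace E] [OpensMeasurableSpace E] {X Z : Ω → E}
    (hX : Measurable X) (hZ : Measurable Z) (hXZ : X ⟂ᵢ[μ] Z) (h : MemLp (X + Z) 2 μ) :
    MemLp X 2 μ := by
  rcases eq_zero_or_neZero μ with rfl | hμ
  · exact memLp_measure_zero
  -- Restrict to an event `‖Z‖ ≤ R` of positive measure: it is independent of `X`, and on it
  -- `‖X‖² ≤ 2 ‖X + Z‖² + 2 R²`.
  obtain ⟨R, hR⟩ : ∃ R : ℕ, 0 < μ {ω | ‖Z ω‖ ≤ R} := by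
    refine exists_measure_pos_of_not_measure_iUnion_null ?_
    have : ⋃ R : ℕ, {ω | ‖Z ω‖ ≤ R} = Set.univ :=
      Set.eq_univ_of_forall fun ω => by simpa using exists_nat_ge ‖Z ω‖
    simp [this, hμ.out]
  set K : Set E := {z | ‖z‖ ≤ R}
  have hK : MeasurableSet K := measurableSet_le measurable_norm measurable_const
  have hind : (fun ω => ‖X ω‖ ^ 2) ⟂ᵢ[μ] (K.indicator (1 : E → ℝ) ∘ Z) :=
    hXZ.comp (measurable_norm.pow_const 2) (measurable_one.indicator hK)
  have hbound : ∀ ω, ‖‖X ω‖ ^ 2 * (K.indicator (1 : E → ℝ) ∘ Z) ω‖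
      ≤ 2 * ‖X ω + Z ω‖ ^ 2 + 2 * R ^ 2 := fun ω => by
    by_cases hω : Z ω ∈ K
    · have hZR : ‖Z ω‖ ≤ R := hω
      have hXZR : ‖X ω‖ ≤ ‖X ω + Z ω‖ + R := by
        simpa using (norm_sub_le (X ω + Z ω) (Z ω)).trans (by gcongr)
      simp only [Function.comp, Set.indicator_of_mem hω, Pi.one_apply, mul_one, norm_pow,
        norm_norm]
      nlinarith [mul_self_le_mul_self (norm_nonneg _) hXZR, sq_nonneg (‖X ω + Z ω‖ - R)]
    · simp only [Function.comp_apply, Set.indicator_of_notMem hω, mul_zero, norm_zero]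
      positivity
  have hint : Integrable (fun ω => ‖X ω‖ ^ 2 * (K.indicator (1 : E → ℝ) ∘ Z) ω) μ :=
    ((((memLp_two_iff_integrable_sq_norm h.1).mp h).const_mul 2).add (integrable_const _)).mono'
      ((hX.norm.pow_const 2).mul ((measurable_one.indicator hK).comp hZ)).aestronglyMeasurable
      (ae_of_all _ hbound)
  have hpos : ¬ (K.indicator (1 : E → ℝ) ∘ Z) =ᵐ[μ] 0 := by
    refine fun h0 => hR.ne' (measure_eq_zero_iff_ae_notMem.mpr (h0.mono fun ω hω hZK => ?_))
    simp [Set.indicator_of_mem (show Z ω ∈ K from hZK)] at hω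
  rw [memLp_two_iff_integrable_sq_norm hX.aestronglyMeasurable]
  exact hind.integrable_left_of_integrable_op (· * ·) 1 one_ne_zero (by simp [enorm_mul]) hint
    (hX.norm.pow_const 2).aestronglyMeasurable
    ((measurable_one.indicator hK).comp hZ).aestronglyMeasurable hpos

lemma memLp_two_of_memLp_two_sum_mul (hWmeas : ∀ i, Measurable (W i)) (hindep : iIndepFun W μ)
    {s : Finset ι} {a : ι → ℂ} {i : ι} (hi : i ∈ s) (ha : a i ≠ 0)
    (h : MemLp (fun ω => ∑ j ∈ s, (W j ω : ℂ) * a j) 2 μ) : MemLp (W i) 2 μ := by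
  classical
  set V : ι → Ω → ℂ := fun j ω => (W j ω : ℂ) * a j
  have hVmeas : ∀ j, Measurable (V j) := fun j =>
    (Complex.measurable_ofReal.comp (hWmeas j)).mul_const _
  have hVind : iIndepFun V μ := hindep.comp (fun j x => (x : ℂ) * a j) fun j =>
    Complex.measurable_ofReal.mul_const _
  have hVi : MemLp (V i) 2 μ := by
    refine (hVind.indepFun_finsetSum_of_notMem hVmeas (Finset.notMem_erase i s)).symm
      |>.memLp_two_of_memLp_two_add (hVmeas i)
        (by rw [Finset.sum_fn]; exact Finset.measurable_sum _ fun j _ => hVmeas j) ?_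
    convert h using 1
    ext ω
    simp only [V, Pi.add_apply, Finset.sum_apply]
    exact Finset.add_sum_erase s (fun j => (W j ω : ℂ) * a j) hi
  refine hVi.of_le_mul (hWmeas i).aestronglyMeasurable (ae_of_all _ fun ω => ?_) (c := ‖a i‖⁻¹)
  simp only [V, norm_mul, Complex.norm_real]
  rw [mul_left_comm, inv_mul_cancel₀ (norm_ne_zero_iff.mpr ha), mul_one]

lemma integral_norm_sq_sum_mul (hWmeas : ∀ i, Measurable (W i)) (hindep : iIndepFun W μ)
    (hident : ∀ i j, IdentDistrib (W i) (W j) μ μ) (hmean : ∀ i, μ[W i] = 0)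
    (hvar : ∀ i, ∫ ω, W i ω ^ 2 ∂μ = σ ^ 2) (s : Finset ι) (a : ι → ℂ) :
    ∫ ω, ‖∑ i ∈ s, (W i ω : ℂ) * a i‖ ^ 2 ∂μ = σ ^ 2 * ∑ i ∈ s, ‖a i‖ ^ 2 := by
  by_cases hL2 : ∀ i, MemLp (W i) 2 μ
  · exact integral_norm_sq_sum_mul_of_pairwise_indep hL2 (fun i j hij => hindep.indepFun hij)
      hmean hvar s a
  -- Otherwise no `W i` is square integrable, `σ ^ 2` is the junk value `0` of a non-integrable
  -- integral, and so is the left-hand side unless all weights vanish.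
  obtain ⟨j, hj⟩ := not_forall.mp hL2
  have hnot : ∀ i, ¬ MemLp (W i) 2 μ := fun i hi => hj ((hident i j).memLp_iff.mp hi)
  have hσ : σ ^ 2 = 0 := by
    rw [← hvar j, integral_undef]
    rwa [← memLp_two_iff_integrable_sq (hWmeas j).aestronglyMeasurable]
  rw [hσ, zero_mul]
  by_cases ha : ∀ i ∈ s, a i = 0
  · have h0 : ∀ ω, ∑ i ∈ s, (W i ω : ℂ) * a i = 0 := fun ω =>
      Finset.sum_eq_zero fun i hi => by rw [ha i hi, mul_zero]
    simp [h0]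
  push Not at ha
  obtain ⟨i, hi, hai⟩ := ha
  refine integral_undef fun hint => hnot i (memLp_two_of_memLp_two_sum_mul hWmeas hindep hi hai ?_)
  have hmeas : Measurable fun ω => ∑ j ∈ s, (W j ω : ℂ) * a j := by fun_prop
  exact (memLp_two_iff_integrable_sq_norm hmeas.aestronglyMeasurable).mpr hint

lemma integral_norm_sq_average (hWmeas : ∀ i, Measurable (W i)) (hindep : iIndepFun W μ)
    (hident : ∀ i j, IdentDistrib (W i) (W j) μ μ) (hmean : ∀ i, μ[W i] = 0)
    (hvar : ∀ i, ∫ ω, W i ω ^ 2 ∂μ = σ ^ 2) (s : Finset ι) {a : ι → ℂ} (ha : ∀ i, ‖a i‖ = 1) :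
    ∫ ω, ‖(1 / (s.card : ℂ)) * ∑ i ∈ s, (W i ω : ℂ) * a i‖ ^ 2 ∂μ = σ ^ 2 * (1 / s.card) := by
  simp only [norm_mul, mul_pow]
  rw [integral_const_mul, integral_norm_sq_sum_mul hWmeas hindep hident hmean hvar]
  rcases s.eq_empty_or_nonempty with rfl | hs
  · simp
  · have : (0 : ℝ) < s.card := by exact_mod_cast hs.card_pos
    simp only [ha, one_pow, Finset.sum_const, nsmul_eq_mul, mul_one, one_div, norm_inv,
      RCLike.norm_natCast, inv_pow]
    field_simp

end Noise

section FirstPassage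

variable {Ω : Type*} [MeasurableSpace Ω] {μ : Measure Ω} {ρ : ℝ} {X Y S : ℕ → Ω → ℝ}
  {M : Ω → ℕ}

lemma indep_comap_of_first_passage {m₁ : MeasurableSpace Ω} (hρ : 0 ≤ ρ)
    (hX1 : ∀ ω, X 1 ω = Y 1 ω) (hXrec : ∀ i, 2 ≤ i → ∀ ω, X i ω = ρ * X (i - 1) ω + Y i ω)
    (hS : ∀ m ω, S m ω = ∑ i ∈ Finset.Icc 1 m, X i ω)
    (hM : ∀ᵐ ω ∂μ, S (M ω) ω ≤ 1 ∧ 1 < S (M ω + 1) ω) (hY : ∀ i, ∀ᵐ ω ∂μ, 0 < Y i ω)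
    (hind : Indep m₁ (⨆ i, MeasurableSpace.comap (Y i) inferInstance) μ) :
    Indep m₁ (MeasurableSpace.comap M ⊤) μ := by
  have hSmeas : ∀ m, Measurable[⨆ i, MeasurableSpace.comap (Y i) inferInstance] (S m) := by
    intro m
    rw [show S m = fun ω => ∑ i ∈ Finset.Icc 1 m, X i ω from funext (hS m)]
    exact Finset.measurable_sum _ fun i hi =>
      measurable_of_ar_recursion (measurable_iSup_comap Y) hX1 hXrec i (Finset.mem_Icc.mp hi).1
  refine hind.comap_of_ae_eq_preimage (A := fun m => {ω | S m ω ≤ 1 ∧ 1 < S (m + 1) ω})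
    (fun m => (measurableSet_le (hSmeas m) measurable_const).inter
      (measurableSet_lt measurable_const (hSmeas (m + 1)))) ?_
  filter_upwards [hM, ae_all_iff.mpr hY] with ω hMω hYω m
  have hmono : StrictMono fun m => S m ω := by
    simp only [hS]
    exact strictMono_sum_Icc_of_pos
      (pos_of_ar_recursion hρ (hX1 ω) (fun i hi => hXrec i hi ω) hYω)
  exact ⟨fun h => h ▸ hMω, hmono.eq_of_le_of_lt_succ hMω⟩

lemma ae_one_div_le_of_first_passage (hρ0 : 0 ≤ ρ) (hρ1 : ρ < 1) {b : ℝ} (hb0 : 0 ≤ b)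
    (hb : b < 1 - ρ) (hX1 : ∀ ω, X 1 ω = Y 1 ω)
    (hXrec : ∀ i, 2 ≤ i → ∀ ω, X i ω = ρ * X (i - 1) ω + Y i ω)
    (hS : ∀ m ω, S m ω = ∑ i ∈ Finset.Icc 1 m, X i ω)
    (hM : ∀ᵐ ω ∂μ, S (M ω) ω ≤ 1 ∧ 1 < S (M ω + 1) ω) (hY : ∀ i, ∀ᵐ ω ∂μ, Y i ω ≤ b) :
    ∀ᵐ ω ∂μ, 1 / (M ω : ℝ) ≤ b / (1 - ρ - b) := by
  filter_upwards [hM, ae_all_iff.mpr hY] with ω hMω hYω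
  have hρ : 0 < 1 - ρ := sub_pos.mpr hρ1
  have hc : b / (1 - ρ) < 1 := (div_lt_one hρ).mpr hb
  calc 1 / (M ω : ℝ) ≤ b / (1 - ρ) / (1 - b / (1 - ρ)) :=
        one_div_le_of_one_lt_sum_Icc hc
          (le_div_one_sub_of_ar_recursion hρ0 hρ1 hb0 (hX1 ω) (fun i hi => hXrec i hi ω) hYω)
          (hS _ ω ▸ hMω.2)
    _ = b / (1 - ρ - b) := by
        have : 1 - ρ - b ≠ 0 := (sub_pos.mpr hb).ne'
        field_simp

end FirstPassage

lemma integral_norm_sq_random_average_le {Ω : Type*} [MeasurableSpace Ω] {μ : Measure Ω}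
    [IsProbabilityMeasure μ] {W : ℕ → Ω → ℝ} {σ : ℝ} (hWmeas : ∀ i, Measurable (W i))
    (hindep : iIndepFun W μ) (hident : ∀ i j, IdentDistrib (W i) (W j) μ μ)
    (hmean : ∀ i, μ[W i] = 0) (hvar : ∀ i, ∫ ω, W i ω ^ 2 ∂μ = σ ^ 2) {M : Ω → ℕ}
    (hM : Measurable M)
    (hMind : Indep (⨆ i, MeasurableSpace.comap (W i) inferInstance) (MeasurableSpace.comap M ⊤) μ)
    {e : ℕ → ℕ → ℂ} (he : ∀ m i, ‖e m i‖ = 1) :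
    ∫ ω, ‖(1 / (M ω : ℂ)) * ∑ i ∈ Finset.Icc 1 (M ω), (W i ω : ℂ) * e (M ω) i‖ ^ 2 ∂μ
      ≤ σ ^ 2 * ∫ ω, 1 / (M ω : ℝ) ∂μ := by
  set F : ℕ → Ω → ℝ := fun m ω =>
    ‖(1 / (m : ℂ)) * ∑ i ∈ Finset.Icc 1 m, (W i ω : ℂ) * e m i‖ ^ 2
  by_cases hint : Integrable (fun ω => F (M ω) ω) μ
  swap
  · rw [integral_undef hint]
    exact mul_nonneg (sq_nonneg σ) (integral_nonneg fun ω => by positivity)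
  have hF : ∀ m, ∫ ω, F m ω ∂μ = σ ^ 2 * (1 / m) := fun m => by
    have h := integral_norm_sq_average hWmeas hindep hident hmean hvar (Finset.Icc 1 m) (he m)
    rwa [Nat.card_Icc, Nat.add_sub_cancel] at h
  have hFmeas : ∀ m, Measurable[⨆ j, MeasurableSpace.comap (W j) inferInstance] (F m) := by
    intro m
    have hsum : Measurable[⨆ j, MeasurableSpace.comap (W j) inferInstance]
        (fun ω => ∑ i ∈ Finset.Icc 1 m, (W i ω : ℂ) * e m i) :=
      Finset.measurable_sum _ fun i _ =>
        (Complex.measurable_ofReal.comp (measurable_iSup_comap W i)).mul_const _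
    exact (continuous_norm.measurable.comp (hsum.const_mul _)).pow_const 2
  have hinv_int : Integrable (fun ω => 1 / (M ω : ℝ)) μ :=
    Integrable.of_bound ((Measurable.of_discrete (f := fun m : ℕ => 1 / (m : ℝ))).comp
      hM).aestronglyMeasurable 1 (ae_of_all _ fun ω => by simpa using Nat.cast_inv_le_one (M ω))
  have h𝒲 := iSup_le fun i => (hWmeas i).comap_le
  have hsumF := hasSum_integral_of_indep h𝒲 hM hMind hFmeas hint
  have hsumG := hasSum_integral_of_indep h𝒲 hM hMind (g := fun m _ => 1 / (m : ℝ))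
    (fun m => measurable_const) hinv_int
  simp only [hF, integral_const, probReal_univ, smul_eq_mul, one_mul] at hsumF hsumG
  refine (hsumF.unique ?_).le
  simpa only [mul_left_comm] using hsumG.mul_left (σ ^ 2)

theorem stmt_16_general
    {Ω : Type*} [MeasurableSpace Ω] (μ : Measure Ω) [IsProbabilityMeasure μ]
    (ρ lam : ℝ) (n : ℕ)
    (hρ0 : 0 ≤ ρ) (hρ1 : ρ < 1) (hlam : 1 < lam)
    (Y X S : ℕ → Ω → ℝ) (M : Ω → ℕ)
    (hYbd : ∀ i, ∀ᵐ ω ∂μ, 0 < Y i ω ∧ Y i ω ≤ lam / n)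
    (hX1 : ∀ ω, X 1 ω = Y 1 ω)
    (hXrec : ∀ i, 2 ≤ i → ∀ ω, X i ω = ρ * X (i - 1) ω + Y i ω)
    (hS : ∀ m ω, S m ω = ∑ i ∈ Finset.Icc 1 m, X i ω)
    (hMmeas : Measurable M)
    (hM : ∀ᵐ ω ∂μ, S (M ω) ω ≤ 1 ∧ 1 < S (M ω + 1) ω)
    (σ : ℝ) (W : ℕ → Ω → ℝ)
    (hWmeas : ∀ i, Measurable (W i))
    (hWindep : iIndepFun W μ)
    (hWident : ∀ i, IdentDistrib (W i) (W 1) μ μ)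
    (hWmean : ∀ i, ∫ ω, W i ω ∂μ = 0)
    (hWvar : ∀ i, ∫ ω, (W i ω) ^ 2 ∂μ = σ ^ 2)
    (hWY : Indep (⨆ i, MeasurableSpace.comap (W i) inferInstance)
                 (⨆ i, MeasurableSpace.comap (Y i) inferInstance) μ)
    (k : ℤ) :
    (∫ ω, ‖(1 / (M ω : ℂ)) * ∑ i ∈ Finset.Icc 1 (M ω),
          (W i ω : ℂ) * Complex.exp
            (-(2 * (Real.pi : ℂ) * Complex.I * (k : ℂ) * (i : ℂ) / (M ω : ℂ)))‖ ^ 2 ∂μ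
        ≤ σ ^ 2 * ∫ ω, 1 / (M ω : ℝ) ∂μ) ∧
    (lam < (n : ℝ) * (1 - ρ) →
      ∫ ω, ‖(1 / (M ω : ℂ)) * ∑ i ∈ Finset.Icc 1 (M ω),
          (W i ω : ℂ) * Complex.exp
            (-(2 * (Real.pi : ℂ) * Complex.I * (k : ℂ) * (i : ℂ) / (M ω : ℂ)))‖ ^ 2 ∂μ
        ≤ σ ^ 2 * lam / ((n : ℝ) * (1 - ρ) - lam)) := by
  have hMind := indep_comap_of_first_passage hρ0 hX1 hXrec hS hM
    (fun i => (hYbd i).mono fun _ h => h.1) hWY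
  have hnoise := integral_norm_sq_random_average_le hWmeas hWindep
    (fun i j => (hWident i).trans (hWident j).symm) hWmean hWvar hMmeas hMind
    (e := fun m i => Complex.exp (-(2 * (Real.pi : ℂ) * Complex.I * (k : ℂ) * (i : ℂ) / (m : ℂ))))
    (fun m i => by rw [Complex.norm_exp]; simp)
  refine ⟨hnoise, fun hlt => hnoise.trans ?_⟩
  have hn : (0 : ℝ) < n := pos_of_mul_pos_left (by linarith : (0 : ℝ) < n * (1 - ρ))
    (sub_pos.mpr hρ1).le
  have hinv := ae_one_div_le_of_first_passage hρ0 hρ1 (by positivity)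
    ((div_lt_iff₀' hn).mpr hlt) hX1 hXrec hS hM (fun i => (hYbd i).mono fun _ h => h.2)
  calc σ ^ 2 * ∫ ω, 1 / (M ω : ℝ) ∂μ ≤ σ ^ 2 * (lam / n / (1 - ρ - lam / n)) := by
        gcongr
        simpa using integral_mono_of_nonneg (ae_of_all _ fun ω => by positivity)
          (integrable_const _) hinv
    _ = σ ^ 2 * lam / (n * (1 - ρ) - lam) := by
        have : (n : ℝ) * (1 - ρ) - lam ≠ 0 := (sub_pos.mpr hlt).ne'
        field_simp

theorem stmt_16
    {Ω : Type*} [MeasurableSpace Ω] (μ : Measure Ω) [IsProbabilityMeasure μ]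
    (ρ lam : ℝ) (n : ℕ)
    (hρ0 : 0 ≤ ρ) (hρ1 : ρ < 1) (hlam : 1 < lam) (hn : 0 < n)
    (Y X S : ℕ → Ω → ℝ) (M : Ω → ℕ)
    (hYmeas : ∀ i, Measurable (Y i))
    (hYindep : iIndepFun Y μ)
    (hYident : ∀ i, IdentDistrib (Y i) (Y 1) μ μ)
    (hYbd : ∀ i, ∀ᵐ ω ∂μ, 0 < Y i ω ∧ Y i ω ≤ lam / n)
    (hYmean : ∀ i, ∫ ω, Y i ω ∂μ = 1 / n)
    (hX1 : ∀ ω, X 1 ω = Y 1 ω)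
    (hXrec : ∀ i, 2 ≤ i → ∀ ω, X i ω = ρ * X (i - 1) ω + Y i ω)
    (hS : ∀ m ω, S m ω = ∑ i ∈ Finset.Icc 1 m, X i ω)
    (hMmeas : Measurable M)
    (hM : ∀ᵐ ω ∂μ, S (M ω) ω ≤ 1 ∧ 1 < S (M ω + 1) ω)
    (σ : ℝ) (W : ℕ → Ω → ℝ)
    (hWmeas : ∀ i, Measurable (W i))
    (hWindep : iIndepFun W μ)
    (hWident : ∀ i, IdentDistrib (W i) (W 1) μ μ)
    (hWmean : ∀ i, ∫ ω, W i ω ∂μ = 0)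
    (hWvar : ∀ i, ∫ ω, (W i ω) ^ 2 ∂μ = σ ^ 2)
    (hWY : Indep (⨆ i, MeasurableSpace.comap (W i) inferInstance)
                 (⨆ i, MeasurableSpace.comap (Y i) inferInstance) μ)
    (k : ℤ) :
    (∫ ω, ‖(1 / (M ω : ℂ)) * ∑ i ∈ Finset.Icc 1 (M ω),
          (W i ω : ℂ) * Complex.exp
            (-(2 * (Real.pi : ℂ) * Complex.I * (k : ℂ) * (i : ℂ) / (M ω : ℂ)))‖ ^ 2 ∂μ
        ≤ σ ^ 2 * ∫ ω, 1 / (M ω : ℝ) ∂μ) ∧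
    (lam < (n : ℝ) * (1 - ρ) →
      ∫ ω, ‖(1 / (M ω : ℂ)) * ∑ i ∈ Finset.Icc 1 (M ω),
          (W i ω : ℂ) * Complex.exp
            (-(2 * (Real.pi : ℂ) * Complex.I * (k : ℂ) * (i : ℂ) / (M ω : ℂ)))‖ ^ 2 ∂μ
        ≤ σ ^ 2 * lam / ((n : ℝ) * (1 - ρ) - lam)) :=
  stmt_16_general μ ρ lam n hρ0 hρ1 hlam Y X S M hYbd hX1 hXrec hS hMmeas hM σ W hWmeas hWindep
    hWident hWmean hWvar hWY k
end
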